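/- arXiv:1310.5617 — 7 statements merged into one kernel-verified Lean document; each statement's English description precedes it below -/
import Mathlib

section
/- Fix T > 0, σ > 0, σ₀ ≥ 0 and s,t ∈ [0,T]. For θ ≠ 0 let c_θ(s,t) = (1/(2θ)) e^{−θ(s+t)} ((2θσ₀² − σ²) + σ² e^{2θ min(s,t)}) − (1/(2θ)) e^{−θT} (σ² e^{θt} + (2θσ₀² − σ²) e^{−θt})(σ² e^{θs} + (2θσ₀² − σ²) e^{−θs}) / (σ² e^{θT} + (2θσ₀² − σ²) e^{−θT}). Then as θ → 0 (θ ≠ 0), c_θ(s,t) converges to σ₀² + σ² min(s,t) − (σ₀² + σ² t)(σ₀² + σ² s)/(σ₀² + σ² T). -/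
/-!
Writing `2θ g_u(θ) = σ² e^{θu} + (2θσ₀² − σ²) e^{−θu}` with
`g_u(θ) = σ₀² e^{−θu} + σ² sinh(θu)/θ`, the factors `1/(2θ)` cancel and
`c_θ(s,t) = e^{θ(min(s,t) − s − t)} g_{min(s,t)}(θ) − e^{−θT} g_t(θ) g_s(θ) / g_T(θ)`.
Since `sinh(θu)/θ → u`, every `g_u(θ)` tends to `σ₀² + σ²u`, and the limit of the
right-hand side follows because `σ₀² + σ²T > 0`.
-/

open Real Set Filter Topology

theorem tendsto_sinh_mul_div_self (u : ℝ) :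
    Tendsto (fun θ : ℝ => sinh (θ * u) / θ) (𝓝[≠] 0) (𝓝 u) := by
  have hd : HasDerivAt (fun θ : ℝ => sinh (θ * u)) u 0 := by
    simpa [Function.comp_def] using (hasDerivAt_sinh (0 * u)).comp 0 (hasDerivAt_mul_const u)
  simpa [div_eq_inv_mul] using hasDerivAt_iff_tendsto_slope_zero.mp hd

theorem tendsto_exp_mul_nhdsNE_zero (c : ℝ) :
    Tendsto (fun θ : ℝ => exp (θ * c)) (𝓝[≠] 0) (𝓝 1) := by
  simpa using ((by fun_prop : Continuous fun θ : ℝ => exp (θ * c)).tendsto 0).mono_left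
    nhdsWithin_le_nhds

/-- `e^{θu}` times the variance at time `u` of the Ornstein–Uhlenbeck process
`dX = -θ X dt + σ dW` started from `X₀ ~ N(0, σ₀²)`. -/
noncomputable def ouScaledVariance (σ σ₀ u θ : ℝ) : ℝ :=
  σ₀ ^ 2 * exp (θ * -u) + σ ^ 2 * (sinh (θ * u) / θ)

theorem tendsto_ouScaledVariance (σ σ₀ u : ℝ) :
    Tendsto (ouScaledVariance σ σ₀ u) (𝓝[≠] 0) (𝓝 (σ₀ ^ 2 + σ ^ 2 * u)) := by
  have h := ((tendsto_exp_mul_nhdsNE_zero (-u)).const_mul (σ₀ ^ 2)).add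
    ((tendsto_sinh_mul_div_self u).const_mul (σ ^ 2))
  rwa [mul_one] at h

theorem two_mul_mul_ouScaledVariance {θ : ℝ} (hθ : θ ≠ 0) (σ σ₀ u : ℝ) :
    2 * θ * ouScaledVariance σ σ₀ u θ
      = σ ^ 2 * exp (θ * u) + (2 * θ * σ₀ ^ 2 - σ ^ 2) * exp (-θ * u) := by
  rw [ouScaledVariance, sinh_eq, neg_mul, mul_neg]
  field_simp
  ring

theorem two_mul_mul_exp_mul_ouScaledVariance {θ : ℝ} (hθ : θ ≠ 0) (σ σ₀ u : ℝ) :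
    2 * θ * (exp (θ * u) * ouScaledVariance σ σ₀ u θ)
      = (2 * θ * σ₀ ^ 2 - σ ^ 2) + σ ^ 2 * exp (2 * θ * u) := by
  rw [mul_left_comm, two_mul_mul_ouScaledVariance hθ, mul_add, mul_left_comm, ← exp_add,
    mul_left_comm (exp _), ← exp_add, ← two_mul, ← mul_assoc, neg_mul, add_neg_cancel, exp_zero]
  ring

theorem ou_bridge_covariance_eq {θ : ℝ} (hθ : θ ≠ 0) (T σ σ₀ s t : ℝ) :
    1 / (2 * θ) * exp (-θ * (s + t)) *
        ((2 * θ * σ₀ ^ 2 - σ ^ 2) + σ ^ 2 * exp (2 * θ * min s t))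
      - 1 / (2 * θ) * exp (-θ * T) *
        ((σ ^ 2 * exp (θ * t) + (2 * θ * σ₀ ^ 2 - σ ^ 2) * exp (-θ * t)) *
          (σ ^ 2 * exp (θ * s) + (2 * θ * σ₀ ^ 2 - σ ^ 2) * exp (-θ * s))) /
        (σ ^ 2 * exp (θ * T) + (2 * θ * σ₀ ^ 2 - σ ^ 2) * exp (-θ * T))
      = exp (θ * (min s t - (s + t))) * ouScaledVariance σ σ₀ (min s t) θ
        - exp (θ * -T) * (ouScaledVariance σ σ₀ t θ * ouScaledVariance σ σ₀ s θ)
          / ouScaledVariance σ σ₀ T θ := by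
  rw [← two_mul_mul_exp_mul_ouScaledVariance hθ, ← two_mul_mul_ouScaledVariance hθ,
    ← two_mul_mul_ouScaledVariance hθ, ← two_mul_mul_ouScaledVariance hθ]
  simp only [neg_mul, mul_neg, exp_neg, mul_sub, exp_sub]
  field_simp

theorem ou_bridge_covariance_tendsto_theta_zero_general
    (T σ σ₀ s t : ℝ) (hT : 0 < T) (hσ : 0 < σ) :
    Tendsto (fun θ : ℝ =>
      (1/(2*θ)) * Real.exp (-θ*(s+t)) *
        ((2*θ*σ₀^2 - σ^2) + σ^2 * Real.exp (2*θ*(min s t)))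
      - (1/(2*θ)) * Real.exp (-θ*T) *
        ((σ^2 * Real.exp (θ*t) + (2*θ*σ₀^2 - σ^2) * Real.exp (-θ*t)) *
         (σ^2 * Real.exp (θ*s) + (2*θ*σ₀^2 - σ^2) * Real.exp (-θ*s))) /
        (σ^2 * Real.exp (θ*T) + (2*θ*σ₀^2 - σ^2) * Real.exp (-θ*T)))
      (nhdsWithin 0 {0}ᶜ)
      (nhds (σ₀^2 + σ^2 * (min s t)
        - (σ₀^2 + σ^2 * t) * (σ₀^2 + σ^2 * s) / (σ₀^2 + σ^2 * T))) := by
  refine Tendsto.congr' (eventually_nhdsWithin_of_forall fun θ hθ =>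
    (ou_bridge_covariance_eq hθ T σ σ₀ s t).symm) ?_
  have hvar := tendsto_ouScaledVariance σ σ₀
  simpa only [one_mul, Pi.div_apply] using
    ((tendsto_exp_mul_nhdsNE_zero (min s t - (s + t))).mul (hvar (min s t))).sub
      (((tendsto_exp_mul_nhdsNE_zero (-T)).mul ((hvar t).mul (hvar s))).div (hvar T)
        (by positivity))

/-- as θ → 0 (θ ≠ 0), the Ornstein–Uhlenbeck bridge covariance
c_θ(s,t) converges to the Brownian bridge covariance with random initial value. -/
theorem ou_bridge_covariance_tendsto_theta_zero
    (T σ σ₀ s t : ℝ) (hT : 0 < T) (hσ : 0 < σ) (hσ₀ : 0 ≤ σ₀)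
    (hs : s ∈ Icc (0:ℝ) T) (ht : t ∈ Icc (0:ℝ) T) :
    Tendsto (fun θ : ℝ =>
      (1/(2*θ)) * Real.exp (-θ*(s+t)) *
        ((2*θ*σ₀^2 - σ^2) + σ^2 * Real.exp (2*θ*(min s t)))
      - (1/(2*θ)) * Real.exp (-θ*T) *
        ((σ^2 * Real.exp (θ*t) + (2*θ*σ₀^2 - σ^2) * Real.exp (-θ*t)) *
         (σ^2 * Real.exp (θ*s) + (2*θ*σ₀^2 - σ^2) * Real.exp (-θ*s))) /
        (σ^2 * Real.exp (θ*T) + (2*θ*σ₀^2 - σ^2) * Real.exp (-θ*T)))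
      (nhdsWithin 0 {0}ᶜ)
      (nhds (σ₀^2 + σ^2 * (min s t)
        - (σ₀^2 + σ^2 * t) * (σ₀^2 + σ^2 * s) / (σ₀^2 + σ^2 * T))) :=
  ou_bridge_covariance_tendsto_theta_zero_general T σ σ₀ s t hT hσ
end

section
/- Fix T > 0, σ > 0, σ₀ ≥ 0 and θ ≠ 0, and let c be the Ornstein–Uhlenbeck bridge covariance. Then c is symmetric, i.e. c(s,t) = c(t,s) for all s,t ∈ [0,T], and c is a positive semidefinite kernel: for every continuous function f : [0,T] → ℝ one has ∫₀ᵀ ∫₀ᵀ c(s,t) f(s) f(t) ds dt ≥ 0. -/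
/-!
Writing the Ornstein–Uhlenbeck process as `X t = exp (-θ t) * M t`, where `M` is a martingale
with variance `H t = σ₀² + σ² (exp (2θt) - 1) / (2θ)`, the bridge covariance becomes
`exp (-θ s) * exp (-θ t) * (H (min s t) - H s * H t / H T)`: a Brownian bridge covariance on the
clock `H`. Such a kernel is positive semidefinite whenever `H` is nondecreasing with `H 0 ≥ 0`.
For `φ = exp (-θ ·) * f` put `P u = ∫ 0..u, H φ` and `Ψ u = ∫ u..T, φ - P T / H T`; then
`(P Ψ + H Ψ²)' = H' Ψ² - φ (P + H Ψ)`, and `P Ψ + H Ψ²` vanishes at `T`, so the quadratic form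
equals `H 0 * Ψ 0 ^ 2 + ∫ 0..T, H' Ψ²`.
-/

open Real Set intervalIntegral

noncomputable def bridgeKernel (H : ℝ → ℝ) (T s t : ℝ) : ℝ :=
  H (min s t) - H s * H t / H T

noncomputable def bridgeTail (H φ : ℝ → ℝ) (T u : ℝ) : ℝ :=
  (∫ t in u..T, φ t) - (∫ t in 0..T, H t * φ t) / H T

theorem integral_comp_min_mul {H φ : ℝ → ℝ} {a b s : ℝ} (hs : s ∈ Icc a b)
    (hH : Continuous H) (hφ : Continuous φ) :
    ∫ t in a..b, H (min s t) * φ t = (∫ t in a..s, H t * φ t) + H s * ∫ t in s..b, φ t := by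
  have hint : Continuous fun t => H (min s t) * φ t := by fun_prop
  rw [← integral_add_adjacent_intervals (hint.intervalIntegrable a s)
    (hint.intervalIntegrable s b), ← integral_const_mul]
  congr 1
  · refine integral_congr fun t ht => ?_
    rw [uIcc_of_le hs.1] at ht
    simp only [min_eq_right ht.2]
  · refine integral_congr fun t ht => ?_
    rw [uIcc_of_le hs.2] at ht
    simp only [min_eq_left ht.1]

section BridgeKernel

variable {H H' φ : ℝ → ℝ} {T : ℝ}

theorem integral_bridgeKernel_mul {s : ℝ} (hs : s ∈ Icc 0 T) (hH : Continuous H)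
    (hφ : Continuous φ) :
    ∫ t in 0..T, bridgeKernel H T s t * φ t
      = (∫ t in 0..s, H t * φ t) + H s * bridgeTail H φ T s := by
  have hmin : Continuous fun t => H (min s t) * φ t := by fun_prop
  have hprod : Continuous fun t => H t * φ t := by fun_prop
  have hsplit : ∀ t, bridgeKernel H T s t * φ t = H (min s t) * φ t - H s / H T * (H t * φ t) :=
    fun t => by rw [bridgeKernel]; ring
  simp_rw [hsplit]
  rw [integral_sub (hmin.intervalIntegrable _ _) ((hprod.intervalIntegrable _ _).const_mul _),
    integral_const_mul, integral_comp_min_mul hs hH hφ, bridgeTail]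
  ring

theorem integral_mul_add_bridgeTail (hH : ∀ u, HasDerivAt H (H' u) u) (hH' : Continuous H')
    (hφ : Continuous φ) (hHT : H T ≠ 0) :
    ∫ s in 0..T, φ s * ((∫ t in 0..s, H t * φ t) + H s * bridgeTail H φ T s)
      = H 0 * bridgeTail H φ T 0 ^ 2 + ∫ s in 0..T, H' s * bridgeTail H φ T s ^ 2 := by
  set P : ℝ → ℝ := fun u => ∫ t in 0..u, H t * φ t
  set Ψ := bridgeTail H φ T
  have hHc : Continuous H := continuous_iff_continuousAt.2 fun u => (hH u).continuousAt
  have hHφ : Continuous fun t => H t * φ t := hHc.mul hφ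
  have hP : ∀ u, HasDerivAt P (H u * φ u) u := fun u =>
    integral_hasDerivAt_right (hHφ.intervalIntegrable _ _) (hHφ.stronglyMeasurableAtFilter _ _)
      hHφ.continuousAt
  have hΨ : ∀ u, HasDerivAt Ψ (-φ u) u := fun u =>
    (integral_hasDerivAt_left (hφ.intervalIntegrable _ _) (hφ.stronglyMeasurableAtFilter _ _)
      hφ.continuousAt).sub_const _
  have hPc : Continuous P := continuous_iff_continuousAt.2 fun u => (hP u).continuousAt
  have hΨc : Continuous Ψ := continuous_iff_continuousAt.2 fun u => (hΨ u).continuousAt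
  have hF : ∀ u, HasDerivAt (fun u => P u * Ψ u + H u * Ψ u ^ 2)
      (H' u * Ψ u ^ 2 - φ u * (P u + H u * Ψ u)) u := fun u =>
    (((hP u).mul (hΨ u)).add ((hH u).mul ((hΨ u).pow 2))).congr_deriv
      (by simp only [Pi.pow_apply]; ring)
  have hΨT : Ψ T = -P T / H T := by simp [Ψ, P, bridgeTail, neg_div]
  have hFT : P T * Ψ T + H T * Ψ T ^ 2 = 0 := by rw [hΨT]; field_simp; ring
  have hP0 : P 0 = 0 := integral_same
  have hFTC := integral_eq_sub_of_hasDerivAt (a := 0) (b := T) (fun u _ => hF u)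
    (by apply Continuous.intervalIntegrable; fun_prop)
  rw [integral_sub (by apply Continuous.intervalIntegrable; fun_prop)
    (by apply Continuous.intervalIntegrable; fun_prop), hFT, hP0] at hFTC
  linarith

theorem integral_integral_bridgeKernel_nonneg (hT : 0 ≤ T) (hH : ∀ u, HasDerivAt H (H' u) u)
    (hH'c : Continuous H') (hH' : ∀ u ∈ Icc 0 T, 0 ≤ H' u) (hH0 : 0 ≤ H 0) (hHT : H T ≠ 0)
    (hφ : ContinuousOn φ (Icc 0 T)) :
    0 ≤ ∫ s in 0..T, ∫ t in 0..T, bridgeKernel H T s t * φ s * φ t := by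
  set g := IccExtend hT ((Icc 0 T).domRestrict φ)
  have hg : Continuous g :=
    continuous_IccExtend_iff.2 (continuousOn_iff_continuous_domRestrict.1 hφ)
  have hgφ : ∀ x ∈ uIcc 0 T, g x = φ x := fun x hx => by
    rw [uIcc_of_le hT] at hx
    exact IccExtend_of_mem hT _ hx
  have hHc : Continuous H := continuous_iff_continuousAt.2 fun u => (hH u).continuousAt
  calc 0 ≤ H 0 * bridgeTail H g T 0 ^ 2 + ∫ s in 0..T, H' s * bridgeTail H g T s ^ 2 :=
        add_nonneg (by positivity)
          (integral_nonneg hT fun u hu => mul_nonneg (hH' u hu) (sq_nonneg _))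
    _ = ∫ s in 0..T, g s * ((∫ t in 0..s, H t * g t) + H s * bridgeTail H g T s) :=
        (integral_mul_add_bridgeTail hH hH'c hg hHT).symm
    _ = ∫ s in 0..T, ∫ t in 0..T, bridgeKernel H T s t * φ s * φ t := by
        refine integral_congr fun s hs => ?_
        have hst : ∀ t ∈ uIcc 0 T, bridgeKernel H T s t * φ s * φ t
            = g s * (bridgeKernel H T s t * g t) := fun t ht => by
          rw [hgφ s hs, hgφ t ht]; ring
        rw [integral_congr hst, integral_const_mul,
          integral_bridgeKernel_mul (uIcc_of_le hT ▸ hs) hHc hg]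

end BridgeKernel

section OrnsteinUhlenbeck

variable {σ σ₀ θ : ℝ}

noncomputable def ouMartingaleVariance (σ σ₀ θ x : ℝ) : ℝ :=
  σ₀ ^ 2 + σ ^ 2 / (2 * θ) * (exp (2 * θ * x) - 1)

theorem hasDerivAt_ouMartingaleVariance (hθ : θ ≠ 0) (u : ℝ) :
    HasDerivAt (ouMartingaleVariance σ σ₀ θ) (σ ^ 2 * exp (2 * θ * u)) u := by
  have hexp : HasDerivAt (fun x => exp (2 * θ * x)) (exp (2 * θ * u) * (2 * θ)) u := by
    simpa using ((hasDerivAt_id u).const_mul (2 * θ)).exp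
  refine (((hexp.sub_const 1).const_mul (σ ^ 2 / (2 * θ))).const_add (σ₀ ^ 2)).congr_deriv ?_
  field_simp

@[simp]
theorem ouMartingaleVariance_zero : ouMartingaleVariance σ σ₀ θ 0 = σ₀ ^ 2 := by
  simp [ouMartingaleVariance]

theorem ouMartingaleVariance_pos {T : ℝ} (hT : 0 < T) (hσ : σ ≠ 0) (hθ : θ ≠ 0) :
    0 < ouMartingaleVariance σ σ₀ θ T := by
  have hmono : StrictMono (ouMartingaleVariance σ σ₀ θ) :=
    strictMono_of_hasDerivAt_pos (hasDerivAt_ouMartingaleVariance hθ) fun u => by positivity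
  calc 0 ≤ ouMartingaleVariance σ σ₀ θ 0 := by rw [ouMartingaleVariance_zero]; positivity
    _ < ouMartingaleVariance σ σ₀ θ T := hmono hT

theorem mul_exp_add_mul_exp_neg_eq (hθ : θ ≠ 0) (x : ℝ) :
    σ ^ 2 * exp (θ * x) + (2 * θ * σ₀ ^ 2 - σ ^ 2) * exp (-θ * x)
      = 2 * θ * exp (-θ * x) * ouMartingaleVariance σ σ₀ θ x := by
  have hexp : exp (θ * x) = exp (-θ * x) * exp (2 * θ * x) := by rw [← exp_add]; ring_nf
  rw [hexp, ouMartingaleVariance]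
  field_simp
  ring

theorem ouBridgeCovariance_eq {T : ℝ} (hθ : θ ≠ 0) (hHT : ouMartingaleVariance σ σ₀ θ T ≠ 0)
    (s t : ℝ) :
    (1/(2*θ)) * exp (-θ*(s+t)) * ((2*θ*σ₀^2 - σ^2) + σ^2 * exp (2*θ*(min s t)))
      - (1/(2*θ)) * exp (-θ*T) *
        ((σ^2 * exp (θ*t) + (2*θ*σ₀^2 - σ^2) * exp (-θ*t)) *
         (σ^2 * exp (θ*s) + (2*θ*σ₀^2 - σ^2) * exp (-θ*s))) /
        (σ^2 * exp (θ*T) + (2*θ*σ₀^2 - σ^2) * exp (-θ*T))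
      = exp (-θ * s) * exp (-θ * t) * bridgeKernel (ouMartingaleVariance σ σ₀ θ) T s t := by
  have hmin : (2*θ*σ₀^2 - σ^2) + σ^2 * exp (2*θ*(min s t))
      = 2 * θ * ouMartingaleVariance σ σ₀ θ (min s t) := by
    rw [ouMartingaleVariance]; field_simp; ring
  have hsum : exp (-θ*(s+t)) = exp (-θ * s) * exp (-θ * t) := by rw [← exp_add]; ring_nf
  rw [mul_exp_add_mul_exp_neg_eq hθ, mul_exp_add_mul_exp_neg_eq hθ,
    mul_exp_add_mul_exp_neg_eq hθ, hmin, hsum, bridgeKernel]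
  field_simp

end OrnsteinUhlenbeck

theorem ou_bridge_covariance_symm_posSemidef_general
    (T σ σ₀ θ : ℝ) (hT : 0 < T) (hσ : 0 < σ) (hθ : θ ≠ 0)
    (c : ℝ → ℝ → ℝ)
    (hc : ∀ s t : ℝ, c s t = (1/(2*θ)) * Real.exp (-θ*(s+t)) *
        ((2*θ*σ₀^2 - σ^2) + σ^2 * Real.exp (2*θ*(min s t)))
      - (1/(2*θ)) * Real.exp (-θ*T) *
        ((σ^2 * Real.exp (θ*t) + (2*θ*σ₀^2 - σ^2) * Real.exp (-θ*t)) *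
         (σ^2 * Real.exp (θ*s) + (2*θ*σ₀^2 - σ^2) * Real.exp (-θ*s))) /
        (σ^2 * Real.exp (θ*T) + (2*θ*σ₀^2 - σ^2) * Real.exp (-θ*T))) :
    (∀ s ∈ Icc (0:ℝ) T, ∀ t ∈ Icc (0:ℝ) T, c s t = c t s) ∧
    (∀ f : ℝ → ℝ, ContinuousOn f (Icc (0:ℝ) T) →
      0 ≤ ∫ s in (0:ℝ)..T, ∫ t in (0:ℝ)..T, c s t * f s * f t) := by
  refine ⟨fun s _ t _ => by rw [hc, hc, min_comm, add_comm t]; ring, fun f hf => ?_⟩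
  have hHT := ouMartingaleVariance_pos (σ₀ := σ₀) hT hσ.ne' hθ
  have hkernel : ∀ s t, c s t * f s * f t = bridgeKernel (ouMartingaleVariance σ σ₀ θ) T s t
      * (exp (-θ * s) * f s) * (exp (-θ * t) * f t) := fun s t => by
    rw [hc, ouBridgeCovariance_eq hθ hHT.ne']; ring
  simp_rw [hkernel]
  refine integral_integral_bridgeKernel_nonneg hT.le (hasDerivAt_ouMartingaleVariance hθ)
    (by fun_prop) (fun u _ => by positivity) (by rw [ouMartingaleVariance_zero]; positivity)
    hHT.ne' (by fun_prop)

/-- the Ornstein–Uhlenbeck bridge covariance is symmetric and is a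
positive semidefinite kernel on [0,T]. -/
theorem ou_bridge_covariance_symm_posSemidef
    (T σ σ₀ θ : ℝ) (hT : 0 < T) (hσ : 0 < σ) (hσ₀ : 0 ≤ σ₀) (hθ : θ ≠ 0)
    (c : ℝ → ℝ → ℝ)
    (hc : ∀ s t : ℝ, c s t = (1/(2*θ)) * Real.exp (-θ*(s+t)) *
        ((2*θ*σ₀^2 - σ^2) + σ^2 * Real.exp (2*θ*(min s t)))
      - (1/(2*θ)) * Real.exp (-θ*T) *
        ((σ^2 * Real.exp (θ*t) + (2*θ*σ₀^2 - σ^2) * Real.exp (-θ*t)) *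
         (σ^2 * Real.exp (θ*s) + (2*θ*σ₀^2 - σ^2) * Real.exp (-θ*s))) /
        (σ^2 * Real.exp (θ*T) + (2*θ*σ₀^2 - σ^2) * Real.exp (-θ*T))) :
    (∀ s ∈ Icc (0:ℝ) T, ∀ t ∈ Icc (0:ℝ) T, c s t = c t s) ∧
    (∀ f : ℝ → ℝ, ContinuousOn f (Icc (0:ℝ) T) →
      0 ≤ ∫ s in (0:ℝ)..T, ∫ t in (0:ℝ)..T, c s t * f s * f t) :=
  ou_bridge_covariance_symm_posSemidef_general T σ σ₀ θ hT hσ hθ c hc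
end

section
/- Fix T > 0, σ > 0, σ₀ ≥ 0 and θ ≠ 0, and let c be the Ornstein–Uhlenbeck bridge covariance. Let f : [0,T] → ℝ be continuous and define g(s) = ∫₀ᵀ c(s,t) f(t) dt. Then g is twice continuously differentiable on [0,T] and satisfies: (i) g''(s) − θ² g(s) = −σ² f(s) for all s ∈ [0,T]; (ii) g(T) = 0; (iii) σ₀² g'(0) = (σ² − θσ₀²) g(0). -/
open Real Set intervalIntegral

/-!
The covariance factors as `c s t = p (min s t) * q (max s t)` with
`p x = (σ² e^{θx} + (2θσ₀² − σ²) e^{−θx}) / (2θ)` and `q x = e^{−θx} − e^{−θT} p x / p T`,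
where `p T > 0`. Both solve `y'' = θ² y`, with `p 0 = σ₀²`, `p' 0 = σ² − θσ₀²`, `q T = 0` and
constant Wronskian `q' p − p' q = −σ²`, so `c` is the Green function of the boundary value
problem: splitting the integral at `s` gives `g s = q s ∫₀ˢ p f + p s ∫ₛᵀ q f`, and on
differentiating, the terms coming from the variable limits cancel in `g'` and contribute
`(q' p − p' q) f = −σ² f` to `g''`.
-/

section MinMaxKernel

theorem integral_mul_min_max_eq {p q f : ℝ → ℝ} {a b s : ℝ} (hp : Continuous p)
    (hq : Continuous q) (hf : Continuous f) (hs : s ∈ Icc a b) :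
    ∫ t in a..b, p (min s t) * q (max s t) * f t
      = q s * (∫ t in a..s, p t * f t) + p s * ∫ t in s..b, q t * f t := by
  have hcont : Continuous fun t => p (min s t) * q (max s t) * f t := by fun_prop
  have hleft : ∫ t in a..s, p (min s t) * q (max s t) * f t = ∫ t in a..s, q s * (p t * f t) :=
    integral_congr fun t ht => by
      rw [uIcc_of_le hs.1] at ht
      rw [min_eq_right ht.2, max_eq_left ht.2]; ring
  have hright : ∫ t in s..b, p (min s t) * q (max s t) * f t = ∫ t in s..b, p s * (q t * f t) :=
    integral_congr fun t ht => by
      rw [uIcc_of_le hs.2] at ht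
      rw [min_eq_left ht.1, max_eq_right ht.1]; ring
  rw [← integral_add_adjacent_intervals (hcont.intervalIntegrable a s)
    (hcont.intervalIntegrable s b), hleft, hright, integral_const_mul, integral_const_mul]

theorem hasDerivAt_mul_integral_add_mul_integral {φ ψ P Q : ℝ → ℝ} {P' Q' a b s : ℝ}
    (hφ : Continuous φ) (hψ : Continuous ψ) (hP : HasDerivAt P P' s) (hQ : HasDerivAt Q Q' s) :
    HasDerivAt (fun x => Q x * (∫ t in a..x, φ t) + P x * ∫ t in x..b, ψ t)
      (Q' * (∫ t in a..s, φ t) + P' * (∫ t in s..b, ψ t) + (Q s * φ s - P s * ψ s)) s := by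
  have hΦ : HasDerivAt (fun x => ∫ t in a..x, φ t) (φ s) s :=
    (hφ.integral_hasStrictDerivAt a s).hasDerivAt
  have hΨ : HasDerivAt (fun x => ∫ t in x..b, ψ t) (-ψ s) s :=
    integral_hasDerivAt_left (hψ.intervalIntegrable s b) (hψ.stronglyMeasurableAtFilter _ _)
      hψ.continuousAt
  exact ((hQ.mul hΦ).add (hP.mul hΨ)).congr_deriv (by ring)

theorem min_max_kernel_operator_bvp {a b k W : ℝ} (hab : a ≤ b) {p q f g : ℝ → ℝ}
    (hp : Differentiable ℝ p) (hp' : ∀ x, HasDerivAt (deriv p) (k * p x) x)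
    (hq : Differentiable ℝ q) (hq' : ∀ x, HasDerivAt (deriv q) (k * q x) x)
    (hW : ∀ x, deriv q x * p x - deriv p x * q x = W) (hf : ContinuousOn f (Icc a b))
    (hg : ∀ s, g s = ∫ t in a..b, p (min s t) * q (max s t) * f t) :
    ∃ g' g'' : ℝ → ℝ,
      (∀ s ∈ Icc a b, HasDerivWithinAt g (g' s) (Icc a b) s) ∧
      (∀ s ∈ Icc a b, HasDerivWithinAt g' (g'' s) (Icc a b) s) ∧
      ContinuousOn g' (Icc a b) ∧ ContinuousOn g'' (Icc a b) ∧
      (∀ s ∈ Icc a b, g'' s - k * g s = W * f s) ∧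
      g b = q b * (∫ t in a..b, p t * f t) ∧
      p a * g' a = deriv p a * g a := by
  set fe : ℝ → ℝ := fun x => f (projIcc a b hab x)
  have hfe : Continuous fe :=
    hf.comp_continuous (continuous_subtype_val.comp continuous_projIcc) fun x => (projIcc a b hab x).2
  have hfe_eq : EqOn fe f (Icc a b) := fun x hx => by simp [fe, projIcc_of_mem hab hx]
  set G : ℝ → ℝ := fun x => q x * (∫ t in a..x, p t * fe t) + p x * ∫ t in x..b, q t * fe t
  set G' : ℝ → ℝ := fun x =>
    deriv q x * (∫ t in a..x, p t * fe t) + deriv p x * ∫ t in x..b, q t * fe t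
  have hgG : EqOn g G (Icc a b) := fun s hs => by
    refine (hg s).trans <| (integral_congr fun t ht => ?_).trans
      (integral_mul_min_max_eq hp.continuous hq.continuous hfe hs)
    rw [uIcc_of_le hab] at ht
    simp only [hfe_eq ht]
  have hpfe : Continuous fun t => p t * fe t := hp.continuous.mul hfe
  have hqfe : Continuous fun t => q t * fe t := hq.continuous.mul hfe
  have hG : ∀ s, HasDerivAt G (G' s) s := fun s =>
    (hasDerivAt_mul_integral_add_mul_integral hpfe hqfe (hp s).hasDerivAt
      (hq s).hasDerivAt).congr_deriv (by ring)
  have hG' : ∀ s, HasDerivAt G' (k * G s + W * fe s) s := fun s =>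
    (hasDerivAt_mul_integral_add_mul_integral hpfe hqfe (hp' s) (hq' s)).congr_deriv
      (by rw [← hW s]; ring)
  have hGc : Continuous G := continuous_iff_continuousAt.2 fun x => (hG x).continuousAt
  have hG'c : Continuous G' := continuous_iff_continuousAt.2 fun x => (hG' x).continuousAt
  refine ⟨G', fun s => k * G s + W * fe s, fun s hs => (hG s).hasDerivWithinAt.congr hgG (hgG hs),
    fun s _ => (hG' s).hasDerivWithinAt, hG'c.continuousOn, (by fun_prop : Continuous _).continuousOn,
    fun s hs => ?_, ?_, ?_⟩
  · dsimp only; rw [hgG hs, hfe_eq hs]; ring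
  · rw [hgG ⟨hab, le_rfl⟩]
    simp only [G, integral_same, mul_zero, add_zero]
    congr 1
    refine integral_congr fun t ht => ?_
    rw [uIcc_of_le hab] at ht
    simp only [hfe_eq ht]
  · rw [hgG ⟨le_rfl, hab⟩]; simp only [G, G', integral_same]; ring

end MinMaxKernel

section ExpCombo

noncomputable def expCombo (θ A B x : ℝ) : ℝ := A * exp (θ * x) + B * exp (-θ * x)

variable (θ A B C D x : ℝ)

theorem hasDerivAt_expCombo :
    HasDerivAt (expCombo θ A B) (expCombo θ (θ * A) (-θ * B) x) x := by
  have hexp (r : ℝ) : HasDerivAt (fun y => exp (r * y)) (r * exp (r * x)) x := by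
    simpa [mul_comm] using ((hasDerivAt_id x).const_mul r).exp
  exact (((hexp θ).const_mul A).add ((hexp (-θ)).const_mul B)).congr_deriv
    (by simp only [expCombo]; ring)

theorem differentiable_expCombo : Differentiable ℝ (expCombo θ A B) := fun x =>
  (hasDerivAt_expCombo θ A B x).differentiableAt

theorem deriv_expCombo : deriv (expCombo θ A B) = expCombo θ (θ * A) (-θ * B) :=
  funext fun x => (hasDerivAt_expCombo θ A B x).deriv

theorem hasDerivAt_deriv_expCombo :
    HasDerivAt (deriv (expCombo θ A B)) (θ ^ 2 * expCombo θ A B x) x := by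
  rw [deriv_expCombo]
  exact (hasDerivAt_expCombo θ _ _ x).congr_deriv (by simp only [expCombo]; ring)

theorem expCombo_wronskian :
    deriv (expCombo θ C D) x * expCombo θ A B x - deriv (expCombo θ A B) x * expCombo θ C D x
      = 2 * θ * (C * B - A * D) := by
  have h : exp (θ * x) * exp (-θ * x) = 1 := by rw [← exp_add]; simp
  simp only [deriv_expCombo, expCombo]
  linear_combination 2 * θ * (C * B - A * D) * h

theorem expCombo_zero : expCombo θ A B 0 = A + B := by simp [expCombo]

theorem deriv_expCombo_zero : deriv (expCombo θ A B) 0 = θ * (A - B) := by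
  simp only [deriv_expCombo, expCombo, mul_zero, exp_zero]; ring

end ExpCombo

section OrnsteinUhlenbeck

variable {σ σ₀ θ T : ℝ}

noncomputable def ouLeft (σ σ₀ θ : ℝ) : ℝ → ℝ :=
  expCombo θ (σ ^ 2 / (2 * θ)) ((2 * θ * σ₀ ^ 2 - σ ^ 2) / (2 * θ))

noncomputable def ouRight (σ σ₀ θ T : ℝ) : ℝ → ℝ :=
  expCombo θ (-(exp (-θ * T) / ouLeft σ σ₀ θ T) * (σ ^ 2 / (2 * θ)))
    (1 - exp (-θ * T) / ouLeft σ σ₀ θ T * ((2 * θ * σ₀ ^ 2 - σ ^ 2) / (2 * θ)))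

theorem ouLeft_apply (x : ℝ) :
    ouLeft σ σ₀ θ x
      = (σ ^ 2 * exp (θ * x) + (2 * θ * σ₀ ^ 2 - σ ^ 2) * exp (-θ * x)) / (2 * θ) := by
  simp only [ouLeft, expCombo]; ring

theorem ouRight_apply (x : ℝ) :
    ouRight σ σ₀ θ T x = exp (-θ * x) - exp (-θ * T) / ouLeft σ σ₀ θ T * ouLeft σ σ₀ θ x := by
  simp only [ouRight, ouLeft, expCombo]; ring

theorem ouLeft_pos (hT : 0 < T) (hσ : 0 < σ) (hθ : θ ≠ 0) : 0 < ouLeft σ σ₀ θ T := by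
  have hsinh : 0 < (exp (θ * T) - exp (-θ * T)) / (2 * θ) := by
    rcases hθ.lt_or_gt with h | h
    · exact div_pos_of_neg_of_neg (sub_neg.2 (exp_lt_exp.2 (by nlinarith))) (by linarith)
    · exact div_pos (sub_pos.2 (exp_lt_exp.2 (by nlinarith))) (by linarith)
  have : ouLeft σ σ₀ θ T
      = σ ^ 2 * ((exp (θ * T) - exp (-θ * T)) / (2 * θ)) + σ₀ ^ 2 * exp (-θ * T) := by
    simp only [ouLeft, expCombo]; field_simp; ring
  rw [this]; positivity

theorem ouLeft_zero (hθ : θ ≠ 0) : ouLeft σ σ₀ θ 0 = σ₀ ^ 2 := by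
  rw [ouLeft, expCombo_zero]; field_simp; ring

theorem deriv_ouLeft_zero (hθ : θ ≠ 0) : deriv (ouLeft σ σ₀ θ) 0 = σ ^ 2 - θ * σ₀ ^ 2 := by
  rw [ouLeft, deriv_expCombo_zero]; field_simp; ring

theorem ouRight_self (hT : ouLeft σ σ₀ θ T ≠ 0) : ouRight σ σ₀ θ T T = 0 := by
  rw [ouRight_apply, div_mul_cancel₀ _ hT, sub_self]

theorem ou_wronskian (hθ : θ ≠ 0) (x : ℝ) :
    deriv (ouRight σ σ₀ θ T) x * ouLeft σ σ₀ θ x - deriv (ouLeft σ σ₀ θ) x * ouRight σ σ₀ θ T x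
      = -σ ^ 2 := by
  unfold ouRight
  generalize exp (-θ * T) / ouLeft σ σ₀ θ T = κ
  rw [ouLeft, expCombo_wronskian]
  field_simp; ring

theorem ouCov_eq_ouLeft_mul_ouRight (hθ : θ ≠ 0) (s t : ℝ) :
    (1/(2*θ)) * Real.exp (-θ*(s+t)) *
        ((2*θ*σ₀^2 - σ^2) + σ^2 * Real.exp (2*θ*(min s t)))
      - (1/(2*θ)) * Real.exp (-θ*T) *
        ((σ^2 * Real.exp (θ*t) + (2*θ*σ₀^2 - σ^2) * Real.exp (-θ*t)) *
         (σ^2 * Real.exp (θ*s) + (2*θ*σ₀^2 - σ^2) * Real.exp (-θ*s))) /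
        (σ^2 * Real.exp (θ*T) + (2*θ*σ₀^2 - σ^2) * Real.exp (-θ*T))
      = ouLeft σ σ₀ θ (min s t) * ouRight σ σ₀ θ T (max s t) := by
  have key : ∀ m M : ℝ,
      (1/(2*θ)) * Real.exp (-θ*(m+M)) * ((2*θ*σ₀^2 - σ^2) + σ^2 * Real.exp (2*θ*m))
        - (1/(2*θ)) * Real.exp (-θ*T) *
          ((σ^2 * Real.exp (θ*M) + (2*θ*σ₀^2 - σ^2) * Real.exp (-θ*M)) *
           (σ^2 * Real.exp (θ*m) + (2*θ*σ₀^2 - σ^2) * Real.exp (-θ*m))) /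
          (σ^2 * Real.exp (θ*T) + (2*θ*σ₀^2 - σ^2) * Real.exp (-θ*T))
        = ouLeft σ σ₀ θ m * ouRight σ σ₀ θ T M := fun m M => by
    have h1 : exp (-θ * (m + M)) = exp (-θ * m) * exp (-θ * M) := by rw [← exp_add]; ring_nf
    have h2 : exp (2 * θ * m) = exp (θ * m) * exp (θ * m) := by rw [← exp_add]; ring_nf
    have h3 : exp (θ * m) * exp (-(θ * m)) = 1 := by rw [← exp_add]; simp
    rw [ouRight_apply, ouLeft_apply, ouLeft_apply, ouLeft_apply, h1, h2]
    simp only [neg_mul]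
    field_simp
    linear_combination exp (-(θ * M)) * σ ^ 2 * exp (θ * m) * h3
  rcases le_total s t with h | h
  · rw [min_eq_left h, max_eq_right h, key]
  · rw [min_eq_right h, max_eq_left h, add_comm s t, mul_comm (σ ^ 2 * exp (θ * t) + _), key]

end OrnsteinUhlenbeck

theorem ou_bridge_covariance_operator_bvp_general
    (T σ σ₀ θ : ℝ) (hT : 0 < T) (hσ : 0 < σ) (hθ : θ ≠ 0)
    (c : ℝ → ℝ → ℝ)
    (hc : ∀ s t : ℝ, c s t = (1/(2*θ)) * Real.exp (-θ*(s+t)) *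
        ((2*θ*σ₀^2 - σ^2) + σ^2 * Real.exp (2*θ*(min s t)))
      - (1/(2*θ)) * Real.exp (-θ*T) *
        ((σ^2 * Real.exp (θ*t) + (2*θ*σ₀^2 - σ^2) * Real.exp (-θ*t)) *
         (σ^2 * Real.exp (θ*s) + (2*θ*σ₀^2 - σ^2) * Real.exp (-θ*s))) /
        (σ^2 * Real.exp (θ*T) + (2*θ*σ₀^2 - σ^2) * Real.exp (-θ*T)))
    (f : ℝ → ℝ) (hf : ContinuousOn f (Icc (0:ℝ) T))
    (g : ℝ → ℝ) (hg : ∀ s : ℝ, g s = ∫ t in (0:ℝ)..T, c s t * f t) :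
    ∃ g' g'' : ℝ → ℝ,
      (∀ s ∈ Icc (0:ℝ) T, HasDerivWithinAt g (g' s) (Icc (0:ℝ) T) s) ∧
      (∀ s ∈ Icc (0:ℝ) T, HasDerivWithinAt g' (g'' s) (Icc (0:ℝ) T) s) ∧
      ContinuousOn g' (Icc (0:ℝ) T) ∧
      ContinuousOn g'' (Icc (0:ℝ) T) ∧
      (∀ s ∈ Icc (0:ℝ) T, g'' s - θ^2 * g s = -(σ^2) * f s) ∧
      g T = 0 ∧
      σ₀^2 * g' 0 = (σ^2 - θ*σ₀^2) * g 0 := by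
  have hg' : ∀ s, g s = ∫ t in (0:ℝ)..T,
      ouLeft σ σ₀ θ (min s t) * ouRight σ σ₀ θ T (max s t) * f t := fun s => by
    simp only [hg, hc, ouCov_eq_ouLeft_mul_ouRight hθ]
  obtain ⟨g', g'', hg'd, hg''d, hg'c, hg''c, hode, hgT, hg0⟩ :=
    min_max_kernel_operator_bvp (p := ouLeft σ σ₀ θ) (q := ouRight σ σ₀ θ T) hT.le
      (differentiable_expCombo _ _ _) (hasDerivAt_deriv_expCombo _ _ _)
      (differentiable_expCombo _ _ _) (hasDerivAt_deriv_expCombo _ _ _) (ou_wronskian hθ) hf hg'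
  refine ⟨g', g'', hg'd, hg''d, hg'c, hg''c, hode, ?_, ?_⟩
  · rw [hgT, ouRight_self (ouLeft_pos hT hσ hθ).ne', zero_mul]
  · rwa [ouLeft_zero hθ, deriv_ouLeft_zero hθ] at hg0

/-- the image g = T^{OB} f of a continuous function f under the
Ornstein–Uhlenbeck bridge covariance operator is C² on [0,T] and satisfies the
boundary value problem g'' − θ²g = −σ²f, g(T) = 0, σ₀² g'(0) = (σ² − θσ₀²) g(0). -/
theorem ou_bridge_covariance_operator_bvp
    (T σ σ₀ θ : ℝ) (hT : 0 < T) (hσ : 0 < σ) (hσ₀ : 0 ≤ σ₀) (hθ : θ ≠ 0)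
    (c : ℝ → ℝ → ℝ)
    (hc : ∀ s t : ℝ, c s t = (1/(2*θ)) * Real.exp (-θ*(s+t)) *
        ((2*θ*σ₀^2 - σ^2) + σ^2 * Real.exp (2*θ*(min s t)))
      - (1/(2*θ)) * Real.exp (-θ*T) *
        ((σ^2 * Real.exp (θ*t) + (2*θ*σ₀^2 - σ^2) * Real.exp (-θ*t)) *
         (σ^2 * Real.exp (θ*s) + (2*θ*σ₀^2 - σ^2) * Real.exp (-θ*s))) /
        (σ^2 * Real.exp (θ*T) + (2*θ*σ₀^2 - σ^2) * Real.exp (-θ*T)))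
    (f : ℝ → ℝ) (hf : ContinuousOn f (Icc (0:ℝ) T))
    (g : ℝ → ℝ) (hg : ∀ s : ℝ, g s = ∫ t in (0:ℝ)..T, c s t * f t) :
    ∃ g' g'' : ℝ → ℝ,
      (∀ s ∈ Icc (0:ℝ) T, HasDerivWithinAt g (g' s) (Icc (0:ℝ) T) s) ∧
      (∀ s ∈ Icc (0:ℝ) T, HasDerivWithinAt g' (g'' s) (Icc (0:ℝ) T) s) ∧
      ContinuousOn g' (Icc (0:ℝ) T) ∧
      ContinuousOn g'' (Icc (0:ℝ) T) ∧
      (∀ s ∈ Icc (0:ℝ) T, g'' s - θ^2 * g s = -(σ^2) * f s) ∧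
      g T = 0 ∧
      σ₀^2 * g' 0 = (σ^2 - θ*σ₀^2) * g 0 :=
  ou_bridge_covariance_operator_bvp_general T σ σ₀ θ hT hσ hθ c hc f hf g hg
end

section
/- Fix T > 0, σ > 0, σ₀ ≥ 0 and θ ≠ 0, and let c be the Ornstein–Uhlenbeck bridge covariance. Let w > 0 satisfy the transcendental equation (σ² − θσ₀²) sin(wT) = −w σ₀² cos(wT). Then for all s ∈ [0,T], ∫₀ᵀ c(s,t) sin(w(t−T)) dt = (σ²/(w² + θ²)) sin(w(s−T)). Moreover, if additionally T/2 − sin(2wT)/(4w) > 0, the function e(t) = (T/2 − sin(2wT)/(4w))^{−1/2} sin(w(t−T)) satisfies ∫₀ᵀ e(t)² dt = 1 and ∫₀ᵀ c(s,t) e(t) dt = (σ²/(w² + θ²)) e(s) for all s ∈ [0,T]; i.e., e is a unit Karhunen–Loève eigenfunction with eigenvalue σ²/(w² + θ²). -/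
/-!
With `A = 2θσ₀² - σ²` and `g t = σ² e^{θt} + A e^{-θt}`, the bridge covariance is
`c s t = (A e^{-θ(s+t)} + σ² e^{-θ|s-t|}) / (2θ) - e^{-θT} g s g t / (2θ g T)`.
Against `f t = sin (w(t-T))` every piece integrates in closed form through the primitive of
`e^{at} f t`; the kernel `e^{-θ|s-t|}` returns `2θ f s / (θ² + w²)` plus multiples of `e^{±θs}`.
The transcendental equation, i.e. the boundary condition of `f` at `0`, reads
`σ² (θ sin wT + w cos wT) = A (θ sin wT - w cos wT)`: it removes the `e^{-θs}` term and gives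
`∫ g f = -w g T / (θ² + w²)`, so that the bridge correction cancels the remaining multiples of
`g s` exactly.
-/

open Real Set intervalIntegral

theorem integral_exp_mul_mul_sin (a w T u v : ℝ) :
    ∫ t in u..v, exp (a*t) * sin (w*(t-T)) =
      (exp (a*v) * (a * sin (w*(v-T)) - w * cos (w*(v-T)))
        - exp (a*u) * (a * sin (w*(u-T)) - w * cos (w*(u-T)))) / (a^2 + w^2) := by
  rcases eq_or_ne (a^2 + w^2) 0 with h0 | h0
  · obtain rfl : w = 0 := by nlinarith [sq_nonneg a, sq_nonneg w]
    simp
  have hderiv : ∀ t ∈ uIcc u v, HasDerivAt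
      (fun t => exp (a*t) * (a * sin (w*(t-T)) - w * cos (w*(t-T))) / (a^2 + w^2))
      (exp (a*t) * sin (w*(t-T))) t := by
    intro t _
    have hexp : HasDerivAt (fun t => a*t) a t := by simpa using (hasDerivAt_id t).const_mul a
    have hphase : HasDerivAt (fun t => w*(t-T)) w t := by
      simpa using ((hasDerivAt_id t).sub_const T).const_mul w
    refine ((hexp.exp.mul ((hphase.sin.const_mul a).sub (hphase.cos.const_mul w))).div_const
      (a^2 + w^2)).congr_deriv ?_
    simp only [Pi.sub_apply]
    field_simp
    ring
  rw [integral_eq_sub_of_hasDerivAt hderiv ((by fun_prop : Continuous _).intervalIntegrable _ _),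
    sub_div]

theorem integral_sin_mul_sub_sq (w T : ℝ) (hw : w ≠ 0) :
    ∫ t in (0:ℝ)..T, sin (w*(t-T))^2 = T/2 - sin (2*w*T)/(4*w) := by
  simp only [mul_sub]
  rw [integral_comp_mul_sub (fun x => sin x ^ 2) hw, integral_sin_sq, smul_eq_mul,
    mul_zero, zero_sub, sub_self, sin_neg, cos_neg, sin_zero, mul_assoc, sin_two_mul]
  field_simp
  ring

theorem integral_exp_neg_mul_abs_sub_mul_sin (θ w : ℝ) {s T : ℝ} (hs : s ∈ Icc 0 T) :
    ∫ t in (0:ℝ)..T, exp (-θ*|s-t|) * sin (w*(t-T)) =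
      (2*θ*sin (w*(s-T)) + exp (-θ*s) * (θ*sin (w*T) + w*cos (w*T))
        - w*exp (θ*s) * exp (-θ*T)) / (θ^2 + w^2) := by
  have hint (a b : ℝ) :
      IntervalIntegrable (fun t => exp (-θ*|s-t|) * sin (w*(t-T))) MeasureTheory.volume a b :=
    (by fun_prop : Continuous _).intervalIntegrable a b
  have hleft : ∫ t in (0:ℝ)..s, exp (-θ*|s-t|) * sin (w*(t-T)) =
      exp (-θ*s) * ∫ t in (0:ℝ)..s, exp (θ*t) * sin (w*(t-T)) := by
    rw [← integral_const_mul]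
    refine integral_congr fun t ht => ?_
    rw [uIcc_of_le hs.1] at ht
    rw [abs_of_nonneg (sub_nonneg.2 ht.2), ← mul_assoc, ← exp_add]
    ring_nf
  have hright : ∫ t in s..T, exp (-θ*|s-t|) * sin (w*(t-T)) =
      exp (θ*s) * ∫ t in s..T, exp (-θ*t) * sin (w*(t-T)) := by
    rw [← integral_const_mul]
    refine integral_congr fun t ht => ?_
    rw [uIcc_of_le hs.2] at ht
    rw [abs_of_nonpos (sub_nonpos.2 ht.1), ← mul_assoc, ← exp_add]
    ring_nf
  rw [← integral_add_adjacent_intervals (hint 0 s) (hint s T), hleft, hright,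
    integral_exp_mul_mul_sin, integral_exp_mul_mul_sin]
  simp only [zero_sub, mul_neg, sin_neg, cos_neg, sub_self, mul_zero, sin_zero, cos_zero,
    exp_zero, neg_mul, exp_neg]
  field_simp
  ring

theorem neg_mul_add_add_two_mul_min (θ s t : ℝ) :
    -θ*(s+t) + 2*θ*min s t = -θ*|s-t| := by
  rcases le_total s t with h | h
  · rw [min_eq_left h, abs_of_nonpos (by linarith)]; ring
  · rw [min_eq_right h, abs_of_nonneg (by linarith)]; ring

section BoundaryCondition

variable {θ w T A B : ℝ}
  (hAB : B * (θ*sin (w*T) + w*cos (w*T)) = A * (θ*sin (w*T) - w*cos (w*T)))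
include hAB

theorem integral_ou_cov_mul_sin {s : ℝ} (hs : s ∈ Icc 0 T) :
    ∫ t in (0:ℝ)..T, exp (-θ*(s+t)) * (A + B * exp (2*θ*min s t)) * sin (w*(t-T)) =
      (2*θ*B*sin (w*(s-T)) - w*exp (-θ*T) * (B*exp (θ*s) + A*exp (-θ*s))) / (θ^2 + w^2) := by
  have hsplit : ∀ t, exp (-θ*(s+t)) * (A + B * exp (2*θ*min s t)) * sin (w*(t-T)) =
      A*exp (-θ*s) * (exp (-θ*t) * sin (w*(t-T))) + B * (exp (-θ*|s-t|) * sin (w*(t-T))) := by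
    intro t
    rw [← neg_mul_add_add_two_mul_min, exp_add, show -θ*(s+t) = -θ*s + -θ*t by ring, exp_add]
    ring
  simp only [hsplit]
  rw [integral_add ((by fun_prop : Continuous _).intervalIntegrable _ _)
      ((by fun_prop : Continuous _).intervalIntegrable _ _),
    integral_const_mul, integral_const_mul, integral_exp_mul_mul_sin,
    integral_exp_neg_mul_abs_sub_mul_sin θ w hs]
  simp only [zero_sub, mul_neg, sin_neg, cos_neg, sub_self, mul_zero, sin_zero, cos_zero,
    exp_zero, neg_sq]
  linear_combination exp (-θ*s) * hAB / (θ^2 + w^2)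

theorem integral_ou_profile_mul_sin :
    ∫ t in (0:ℝ)..T, (B*exp (θ*t) + A*exp (-θ*t)) * sin (w*(t-T)) =
      -w * (B*exp (θ*T) + A*exp (-θ*T)) / (θ^2 + w^2) := by
  simp only [add_mul, mul_assoc]
  rw [integral_add ((by fun_prop : Continuous _).intervalIntegrable _ _)
      ((by fun_prop : Continuous _).intervalIntegrable _ _),
    integral_const_mul, integral_const_mul, integral_exp_mul_mul_sin, integral_exp_mul_mul_sin]
  simp only [zero_sub, mul_neg, sin_neg, cos_neg, sub_self, mul_zero, sin_zero, cos_zero,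
    exp_zero, neg_sq]
  linear_combination hAB / (θ^2 + w^2)

end BoundaryCondition

theorem mul_ou_bridge_denom_pos {T σ σ₀ θ : ℝ} (hT : 0 < T) (hσ : σ ≠ 0) (hθ : θ ≠ 0) :
    0 < θ * (σ^2 * exp (θ*T) + (2*θ*σ₀^2 - σ^2) * exp (-θ*T)) := by
  have hsinh : 0 < θ * (exp (θ*T) - exp (-θ*T)) := by
    rcases hθ.lt_or_gt with h | h
    · exact mul_pos_of_neg_of_neg h (sub_neg.2 (exp_lt_exp.2 (by nlinarith)))
    · exact mul_pos h (sub_pos.2 (exp_lt_exp.2 (by nlinarith)))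
  have hsplit : θ * (σ^2 * exp (θ*T) + (2*θ*σ₀^2 - σ^2) * exp (-θ*T)) =
      σ^2 * (θ * (exp (θ*T) - exp (-θ*T))) + 2 * (θ*σ₀)^2 * exp (-θ*T) := by ring
  rw [hsplit]
  exact add_pos_of_pos_of_nonneg (mul_pos (by positivity) hsinh) (by positivity)

noncomputable def ouBridgeCov (T σ σ₀ θ s t : ℝ) : ℝ :=
  (1/(2*θ)) * exp (-θ*(s+t)) * ((2*θ*σ₀^2 - σ^2) + σ^2 * exp (2*θ*(min s t)))
    - (1/(2*θ)) * exp (-θ*T) *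
      ((σ^2 * exp (θ*t) + (2*θ*σ₀^2 - σ^2) * exp (-θ*t)) *
       (σ^2 * exp (θ*s) + (2*θ*σ₀^2 - σ^2) * exp (-θ*s))) /
      (σ^2 * exp (θ*T) + (2*θ*σ₀^2 - σ^2) * exp (-θ*T))

theorem integral_ouBridgeCov_mul_sin {T σ σ₀ θ w s : ℝ} (hT : 0 < T) (hσ : σ ≠ 0) (hθ : θ ≠ 0)
    (heq : (σ^2 - θ*σ₀^2) * sin (w*T) = -(w * σ₀^2 * cos (w*T))) (hs : s ∈ Icc 0 T) :
    ∫ t in (0:ℝ)..T, ouBridgeCov T σ σ₀ θ s t * sin (w*(t-T)) =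
      σ^2/(w^2 + θ^2) * sin (w*(s-T)) := by
  set A := 2*θ*σ₀^2 - σ^2 with hA_def
  set D := σ^2 * exp (θ*T) + A * exp (-θ*T) with hD_def
  have hD : D ≠ 0 := right_ne_zero_of_mul (mul_ou_bridge_denom_pos hT hσ hθ).ne'
  have hAB : σ^2 * (θ*sin (w*T) + w*cos (w*T)) = A * (θ*sin (w*T) - w*cos (w*T)) := by
    linear_combination 2*θ*heq
  have hsplit : ∀ t, ouBridgeCov T σ σ₀ θ s t * sin (w*(t-T)) =
      (1/(2*θ)) * (exp (-θ*(s+t)) * (A + σ^2 * exp (2*θ*min s t)) * sin (w*(t-T)))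
      - exp (-θ*T) * (σ^2*exp (θ*s) + A*exp (-θ*s)) / (2*θ*D)
        * ((σ^2*exp (θ*t) + A*exp (-θ*t)) * sin (w*(t-T))) := by
    intro t
    rw [ouBridgeCov, ← hA_def, ← hD_def]
    field_simp
  simp only [hsplit]
  rw [integral_sub ((by fun_prop : Continuous _).intervalIntegrable _ _)
      ((by fun_prop : Continuous _).intervalIntegrable _ _),
    integral_const_mul, integral_const_mul, integral_ou_cov_mul_sin hAB hs,
    integral_ou_profile_mul_sin hAB, ← hD_def]
  field_simp
  ring

theorem ou_bridge_KL_eigenfunction_general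
    (T σ σ₀ θ : ℝ) (hT : 0 < T) (hσ : 0 < σ) (hθ : θ ≠ 0)
    (c : ℝ → ℝ → ℝ)
    (hc : ∀ s t : ℝ, c s t = (1/(2*θ)) * Real.exp (-θ*(s+t)) *
        ((2*θ*σ₀^2 - σ^2) + σ^2 * Real.exp (2*θ*(min s t)))
      - (1/(2*θ)) * Real.exp (-θ*T) *
        ((σ^2 * Real.exp (θ*t) + (2*θ*σ₀^2 - σ^2) * Real.exp (-θ*t)) *
         (σ^2 * Real.exp (θ*s) + (2*θ*σ₀^2 - σ^2) * Real.exp (-θ*s))) /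
        (σ^2 * Real.exp (θ*T) + (2*θ*σ₀^2 - σ^2) * Real.exp (-θ*T)))
    (w : ℝ) (hw : 0 < w)
    (heq : (σ^2 - θ*σ₀^2) * Real.sin (w*T) = -(w * σ₀^2 * Real.cos (w*T))) :
    (∀ s ∈ Icc (0:ℝ) T,
      (∫ t in (0:ℝ)..T, c s t * Real.sin (w*(t-T))) =
        (σ^2/(w^2 + θ^2)) * Real.sin (w*(s-T))) ∧
    (0 < T/2 - Real.sin (2*w*T)/(4*w) →
      ∀ e : ℝ → ℝ,
        (∀ t : ℝ, e t = (Real.sqrt (T/2 - Real.sin (2*w*T)/(4*w)))⁻¹ * Real.sin (w*(t-T))) →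
        (∫ t in (0:ℝ)..T, (e t)^2) = 1 ∧
        ∀ s ∈ Icc (0:ℝ) T,
          (∫ t in (0:ℝ)..T, c s t * e t) = (σ^2/(w^2 + θ^2)) * e s) := by
  obtain rfl : c = ouBridgeCov T σ σ₀ θ := funext fun s => funext (hc s)
  have eigen (s : ℝ) (hs : s ∈ Icc 0 T) := integral_ouBridgeCov_mul_sin hT hσ.ne' hθ heq hs
  refine ⟨eigen, fun hpos e he => ⟨?_, fun s hs => ?_⟩⟩
  · simp only [he, mul_pow, integral_const_mul, integral_sin_mul_sub_sq w T hw.ne', inv_pow,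
      sq_sqrt hpos.le]
    exact inv_mul_cancel₀ hpos.ne'
  · simp only [he, mul_left_comm (ouBridgeCov T σ σ₀ θ s _), integral_const_mul, eigen s hs]
    ring

/-- if w > 0 solves the transcendental equation
(σ² − θσ₀²) sin(wT) = −w σ₀² cos(wT), then t ↦ sin(w(t−T)) is an eigenfunction of
the Ornstein–Uhlenbeck bridge covariance operator with eigenvalue σ²/(w²+θ²), and
its normalization e is a unit Karhunen–Loève eigenfunction. -/
theorem ou_bridge_KL_eigenfunction
    (T σ σ₀ θ : ℝ) (hT : 0 < T) (hσ : 0 < σ) (hσ₀ : 0 ≤ σ₀) (hθ : θ ≠ 0)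
    (c : ℝ → ℝ → ℝ)
    (hc : ∀ s t : ℝ, c s t = (1/(2*θ)) * Real.exp (-θ*(s+t)) *
        ((2*θ*σ₀^2 - σ^2) + σ^2 * Real.exp (2*θ*(min s t)))
      - (1/(2*θ)) * Real.exp (-θ*T) *
        ((σ^2 * Real.exp (θ*t) + (2*θ*σ₀^2 - σ^2) * Real.exp (-θ*t)) *
         (σ^2 * Real.exp (θ*s) + (2*θ*σ₀^2 - σ^2) * Real.exp (-θ*s))) /
        (σ^2 * Real.exp (θ*T) + (2*θ*σ₀^2 - σ^2) * Real.exp (-θ*T)))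
    (w : ℝ) (hw : 0 < w)
    (heq : (σ^2 - θ*σ₀^2) * Real.sin (w*T) = -(w * σ₀^2 * Real.cos (w*T))) :
    (∀ s ∈ Icc (0:ℝ) T,
      (∫ t in (0:ℝ)..T, c s t * Real.sin (w*(t-T))) =
        (σ^2/(w^2 + θ^2)) * Real.sin (w*(s-T))) ∧
    (0 < T/2 - Real.sin (2*w*T)/(4*w) →
      ∀ e : ℝ → ℝ,
        (∀ t : ℝ, e t = (Real.sqrt (T/2 - Real.sin (2*w*T)/(4*w)))⁻¹ * Real.sin (w*(t-T))) →
        (∫ t in (0:ℝ)..T, (e t)^2) = 1 ∧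
        ∀ s ∈ Icc (0:ℝ) T,
          (∫ t in (0:ℝ)..T, c s t * e t) = (σ^2/(w^2 + θ^2)) * e s) :=
  ou_bridge_KL_eigenfunction_general T σ σ₀ θ hT hσ hθ c hc w hw heq
end

section
/- Fix T > 0, σ > 0, σ₀ ≥ 0 and θ ∈ ℝ. Let w > 0 and w' > 0 be two distinct solutions of the transcendental equation (σ² − θσ₀²) sin(wT) = −w σ₀² cos(wT). Then ∫₀ᵀ sin(w(t−T)) sin(w'(t−T)) dt = 0; i.e., the corresponding Karhunen–Loève eigenfunctions of the Ornstein–Uhlenbeck bridge are orthogonal in L²([0,T]). -/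
open Real intervalIntegral

/-! Both eigenfunctions, written in `s = t - T`, solve `f'' = -ω² f` with `f(0) = 0` and the
Robin condition `α f(-T) = β f'(-T)` at `s = -T`, where `α = σ² - θσ₀²` and `β = σ₀²` are not both
zero because `α + θβ = σ² > 0`. The Wronskian `W = f g' - f' g` satisfies
`W' = (w² - w'²) f g`, so `(w² - w'²) ∫ f g = W(0) - W(-T)`. Both boundary values of `W` vanish,
and `w² ≠ w'²`. -/

noncomputable def sinWronskian (a b x : ℝ) : ℝ :=
  sin (a * x) * (b * cos (b * x)) - a * cos (a * x) * sin (b * x)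

lemma hasDerivAt_sinWronskian (a b x : ℝ) :
    HasDerivAt (sinWronskian a b) ((a ^ 2 - b ^ 2) * (sin (a * x) * sin (b * x))) x := by
  have hsin (c : ℝ) : HasDerivAt (fun x => sin (c * x)) (cos (c * x) * c) x :=
    (hasDerivAt_sin _).comp x (hasDerivAt_const_mul c)
  have hcos (c : ℝ) : HasDerivAt (fun x => cos (c * x)) (-sin (c * x) * c) x :=
    (hasDerivAt_cos _).comp x (hasDerivAt_const_mul c)
  exact (((hsin a).mul ((hcos b).const_mul b)).sub
    (((hcos a).const_mul a).mul (hsin b))).congr_deriv (by ring)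

lemma sq_sub_sq_mul_integral_sin_mul_sin (a b u v : ℝ) :
    (a ^ 2 - b ^ 2) * ∫ x in u..v, sin (a * x) * sin (b * x) =
      sinWronskian a b v - sinWronskian a b u := by
  rw [← integral_const_mul]
  exact integral_eq_sub_of_hasDerivAt (fun x _ => hasDerivAt_sinWronskian a b x)
    (Continuous.intervalIntegrable (by fun_prop) u v)

lemma sinWronskian_zero (a b : ℝ) : sinWronskian a b 0 = 0 := by
  simp [sinWronskian]

lemma mul_sub_mul_eq_zero_of_robin {α β : ℝ} (hαβ : α ≠ 0 ∨ β ≠ 0) {f f' g g' : ℝ}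
    (hf : α * f = β * f') (hg : α * g = β * g') : f * g' - f' * g = 0 := by
  rcases hαβ with hα | hβ
  · refine (mul_eq_zero.mp ?_).resolve_left hα
    linear_combination g' * hf - f' * hg
  · refine (mul_eq_zero.mp ?_).resolve_left hβ
    linear_combination g * hf - f * hg

theorem ou_bridge_KL_eigenfunctions_orthogonal_general
    (T σ σ₀ θ : ℝ) (hσ : 0 < σ)
    (w w' : ℝ) (hw : 0 < w) (hw' : 0 < w') (hne : w ≠ w')
    (heq : (σ^2 - θ*σ₀^2) * Real.sin (w*T) = -(w * σ₀^2 * Real.cos (w*T)))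
    (heq' : (σ^2 - θ*σ₀^2) * Real.sin (w'*T) = -(w' * σ₀^2 * Real.cos (w'*T))) :
    (∫ t in (0:ℝ)..T, Real.sin (w*(t-T)) * Real.sin (w'*(t-T))) = 0 := by
  have hsq : w ^ 2 - w' ^ 2 ≠ 0 :=
    sub_ne_zero.mpr fun h => hne ((pow_left_inj₀ hw.le hw'.le two_ne_zero).mp h)
  have hαβ : σ ^ 2 - θ * σ₀ ^ 2 ≠ 0 ∨ σ₀ ^ 2 ≠ 0 := by
    by_contra! h
    have : σ ^ 2 = 0 := by linear_combination h.1 + θ * h.2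
    exact hσ.ne' (pow_eq_zero_iff two_ne_zero |>.mp this)
  have hrobin (ω : ℝ) (h : (σ^2 - θ*σ₀^2) * sin (ω*T) = -(ω * σ₀^2 * cos (ω*T))) :
      (σ ^ 2 - θ * σ₀ ^ 2) * sin (ω * -T) = σ₀ ^ 2 * (ω * cos (ω * -T)) := by
    rw [mul_neg, sin_neg, cos_neg]
    linear_combination -h
  have hW : sinWronskian w w' (-T) = 0 :=
    mul_sub_mul_eq_zero_of_robin hαβ (hrobin w heq) (hrobin w' heq')
  rw [integral_comp_sub_right (fun s => sin (w * s) * sin (w' * s)), zero_sub, sub_self]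
  refine (mul_eq_zero.mp ?_).resolve_left hsq
  rw [sq_sub_sq_mul_integral_sin_mul_sin, sinWronskian_zero, hW, sub_zero]

/-- eigenfunctions of the Ornstein–Uhlenbeck bridge covariance
operator associated with two distinct positive solutions of the transcendental
equation are orthogonal in L²([0,T]). -/
theorem ou_bridge_KL_eigenfunctions_orthogonal
    (T σ σ₀ θ : ℝ) (hT : 0 < T) (hσ : 0 < σ) (hσ₀ : 0 ≤ σ₀)
    (w w' : ℝ) (hw : 0 < w) (hw' : 0 < w') (hne : w ≠ w')
    (heq : (σ^2 - θ*σ₀^2) * Real.sin (w*T) = -(w * σ₀^2 * Real.cos (w*T)))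
    (heq' : (σ^2 - θ*σ₀^2) * Real.sin (w'*T) = -(w' * σ₀^2 * Real.cos (w'*T))) :
    (∫ t in (0:ℝ)..T, Real.sin (w*(t-T)) * Real.sin (w'*(t-T))) = 0 :=
  ou_bridge_KL_eigenfunctions_orthogonal_general T σ σ₀ θ hσ w w' hw hw' hne heq heq'
end

section
/- Fix T > 0, σ > 0, σ₀ > 0 and θ ∈ ℝ with θσ₀² < σ². Then for every integer n ≥ 1 there is exactly one solution w of the equation (σ² − θσ₀²) sin(wT) = −w σ₀² cos(wT) (equivalently (σ² − θσ₀²) tan(wT) = −σ₀² w) in the open interval (nπ/T − π/(2T), nπ/T), and every positive solution of this equation lies in one of these intervals. Consequently the positive solutions form a strictly increasing sequence (w_n)_{n≥1} with w_n ∈ (nπ/T − π/(2T), nπ/T) for each n ≥ 1. -/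
/-!
With `x = w T` the equation becomes `a sin x + b x cos x = 0`, where `a = σ² − θσ₀² > 0` and
`b = σ₀² / T > 0`. A root has `cos x ≠ 0`, so it satisfies `a tan x = −b x`; for `x > 0` this
forces `sin x cos x < 0`, i.e. `x ∈ (nπ − π/2, nπ)` for some `n ≥ 1`. On each branch of `tan`
the map `x ↦ a tan x + b x` is strictly increasing, so such an interval holds at most one root,
and it holds one by the intermediate value theorem: up to the sign `(−1)ⁿ` the left-hand side
goes from `−a` at `nπ − π/2` to `b nπ` at `nπ`.
-/

open Real Set

lemma strictMonoOn_mul_tan_add_mul {a b : ℝ} (ha : 0 < a) (hb : 0 ≤ b) (k : ℤ) :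
    StrictMonoOn (fun x => a * tan x + b * x) (Ioo (k * π - π / 2) (k * π + π / 2)) := by
  intro x hx y hy hxy
  have htan : tan (x - k * π) < tan (y - k * π) :=
    strictMonoOn_tan ⟨by linarith [hx.1], by linarith [hx.2]⟩
      ⟨by linarith [hy.1], by linarith [hy.2]⟩ (by linarith)
  rw [tan_sub_int_mul_pi, tan_sub_int_mul_pi] at htan
  dsimp only
  nlinarith

lemma exists_nat_mem_Ioo_of_sin_mul_cos_neg {x : ℝ} (hx : 0 < x) (h : sin x * cos x < 0) :
    ∃ n : ℕ, 1 ≤ n ∧ x ∈ Ioo (n * π - π / 2) (n * π) := by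
  set m := ⌊x / π⌋₊
  have hm : m * π ≤ x := (le_div_iff₀ pi_pos).1 (Nat.floor_le (by positivity))
  have hm' : x < (m + 1) * π := (div_lt_iff₀ pi_pos).1 (Nat.lt_floor_add_one _)
  have hsin : sin (2 * x - m * (2 * π)) < 0 := by
    rw [sin_sub_nat_mul_two_pi, sin_two_mul]; linarith
  have hhalf : π < 2 * x - m * (2 * π) := by
    by_contra! hle
    exact hsin.not_ge (sin_nonneg_of_nonneg_of_le_pi (by linarith) hle)
  exact ⟨m + 1, by omega, by push_cast; constructor <;> linarith⟩

noncomputable def klFreqFun (a b x : ℝ) : ℝ := a * sin x + b * x * cos x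

namespace klFreqFun

variable {a b x : ℝ}

lemma cos_ne_zero (ha : a ≠ 0) (h : klFreqFun a b x = 0) : cos x ≠ 0 := by
  intro hc
  have hs : sin x = 0 := by simpa [klFreqFun, hc, ha] using h
  simpa [hs, hc] using sin_sq_add_cos_sq x

lemma mul_tan_add_mul_eq_zero (ha : a ≠ 0) (h : klFreqFun a b x = 0) : a * tan x + b * x = 0 := by
  have hc := cos_ne_zero ha h
  rw [tan_eq_sin_div_cos]
  field_simp
  unfold klFreqFun at h
  linear_combination h

lemma sin_mul_cos_neg (ha : 0 < a) (hb : 0 < b) (hx : 0 < x) (h : klFreqFun a b x = 0) :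
    sin x * cos x < 0 := by
  have hc : 0 < cos x ^ 2 := sq_pos_of_ne_zero (cos_ne_zero ha.ne' h)
  have : a * (sin x * cos x) = -(b * x * cos x ^ 2) := by
    unfold klFreqFun at h; linear_combination cos x * h
  by_contra! hsc
  nlinarith [mul_nonneg ha.le hsc, mul_pos (mul_pos hb hx) hc]

lemma div_apply_mul {T : ℝ} (hT : T ≠ 0) (w : ℝ) :
    klFreqFun a (b / T) (w * T) = a * sin (w * T) + w * b * cos (w * T) := by
  rw [klFreqFun]
  field_simp

lemma nat_mul_pi_sub (n : ℕ) (s : ℝ) :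
    klFreqFun a b (n * π - s) = (-1) ^ n * (b * (n * π - s) * cos s - a * sin s) := by
  rw [klFreqFun, sin_nat_mul_pi_sub, cos_nat_mul_pi_sub]
  ring

lemma exists_eq_zero_mem_Ioo (ha : 0 < a) (hb : 0 < b) {n : ℕ} (hn : 1 ≤ n) :
    ∃ x ∈ Ioo (n * π - π / 2) (n * π), klFreqFun a b x = 0 := by
  set φ : ℝ → ℝ := fun s => b * (n * π - s) * cos s - a * sin s
  have hφ : ContinuousOn φ (Icc 0 (π / 2)) := by fun_prop
  have h0 : (0 : ℝ) ∈ Ioo (φ (π / 2)) (φ 0) := by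
    have : (0 : ℝ) < n := by exact_mod_cast hn
    simp only [φ, cos_pi_div_two, sin_pi_div_two, cos_zero, sin_zero, mul_zero, mul_one, sub_zero,
      zero_sub]
    exact ⟨by linarith, by positivity⟩
  obtain ⟨s, hs, hφs⟩ := intermediate_value_Ioo' (by positivity) hφ h0
  refine ⟨n * π - s, ⟨by linarith [hs.2], by linarith [hs.1]⟩, ?_⟩
  rw [nat_mul_pi_sub, show b * (n * π - s) * cos s - a * sin s = 0 from hφs, mul_zero]

theorem existsUnique_eq_zero_mem_Ioo (ha : 0 < a) (hb : 0 < b) {n : ℕ} (hn : 1 ≤ n) :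
    ∃! x, x ∈ Ioo (n * π - π / 2) (n * π) ∧ klFreqFun a b x = 0 := by
  obtain ⟨x, hx, hfx⟩ := exists_eq_zero_mem_Ioo ha hb hn
  refine ⟨x, ⟨hx, hfx⟩, fun y ⟨hy, hfy⟩ => ?_⟩
  have hsub : Ioo (n * π - π / 2) (n * π) ⊆ Ioo ((n : ℤ) * π - π / 2) ((n : ℤ) * π + π / 2) := by
    push_cast
    exact Ioo_subset_Ioo_right (by linarith [pi_pos])
  exact (strictMonoOn_mul_tan_add_mul ha hb.le n).injOn (hsub hy) (hsub hx)
    ((mul_tan_add_mul_eq_zero ha.ne' hfy).trans (mul_tan_add_mul_eq_zero ha.ne' hfx).symm)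

end klFreqFun

lemma exists_seq_of_existsUnique_mem {α : Type*} [Preorder α] {P Q : α → Prop} {I : ℕ → Set α}
    (hlt : ∀ n m, 1 ≤ n → n < m → ∀ x ∈ I n, ∀ y ∈ I m, x < y)
    (hex : ∀ n, 1 ≤ n → ∃! w, w ∈ I n ∧ P w)
    (hcover : ∀ w, Q w → P w → ∃ n, 1 ≤ n ∧ w ∈ I n) :
    ∃ wseq : ℕ → α, (∀ n m, 1 ≤ n → n < m → wseq n < wseq m) ∧
      (∀ n, 1 ≤ n → wseq n ∈ I n ∧ P (wseq n)) ∧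
      (∀ w, Q w → P w → ∃ n, 1 ≤ n ∧ w = wseq n) := by
  obtain ⟨w₁, -⟩ := hex 1 le_rfl
  have : Nonempty α := ⟨w₁⟩
  choose! wseq hwseq huniq using hex
  refine ⟨wseq, fun n m hn hnm => hlt n m hn hnm _ (hwseq n hn).1 _ (hwseq m (hn.trans hnm.le)).1,
    hwseq, fun w hQ hP => ?_⟩
  obtain ⟨n, hn, hw⟩ := hcover w hQ hP
  exact ⟨n, hn, huniq n hn w ⟨hw, hP⟩⟩

lemma mem_Ioo_div_iff_mul_mem_Ioo {T : ℝ} (hT : 0 < T) (n : ℕ) (w : ℝ) :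
    w ∈ Ioo ((n * π) / T - π / (2 * T)) ((n * π) / T) ↔ w * T ∈ Ioo (n * π - π / 2) (n * π) := by
  rw [show (n * π) / T - π / (2 * T) = (n * π - π / 2) / T by ring,
    ← preimage_mul_const_Ioo₀ _ _ hT]
  rfl

theorem ou_bridge_KL_frequencies_case_b_general
    (T σ σ₀ θ : ℝ) (hT : 0 < T) (hσ₀ : 0 < σ₀)
    (hcase : θ*σ₀^2 < σ^2) :
    (∀ n : ℕ, 1 ≤ n → ∃! w : ℝ,
        w ∈ Ioo ((n*Real.pi)/T - Real.pi/(2*T)) ((n*Real.pi)/T) ∧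
        (σ^2 - θ*σ₀^2) * Real.sin (w*T) = -(w * σ₀^2 * Real.cos (w*T))) ∧
    (∀ w : ℝ, 0 < w →
      (σ^2 - θ*σ₀^2) * Real.sin (w*T) = -(w * σ₀^2 * Real.cos (w*T)) →
      ∃ n : ℕ, 1 ≤ n ∧ w ∈ Ioo ((n*Real.pi)/T - Real.pi/(2*T)) ((n*Real.pi)/T)) ∧
    (∃ wseq : ℕ → ℝ,
      (∀ n m : ℕ, 1 ≤ n → n < m → wseq n < wseq m) ∧
      (∀ n : ℕ, 1 ≤ n →
        wseq n ∈ Ioo ((n*Real.pi)/T - Real.pi/(2*T)) ((n*Real.pi)/T) ∧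
        (σ^2 - θ*σ₀^2) * Real.sin (wseq n * T) = -(wseq n * σ₀^2 * Real.cos (wseq n * T))) ∧
      (∀ w : ℝ, 0 < w →
        (σ^2 - θ*σ₀^2) * Real.sin (w*T) = -(w * σ₀^2 * Real.cos (w*T)) →
        ∃ n : ℕ, 1 ≤ n ∧ w = wseq n)) := by
  have ha : 0 < σ^2 - θ*σ₀^2 := sub_pos.mpr hcase
  have hb : 0 < σ₀^2 / T := by positivity
  have hE : ∀ w, (σ^2 - θ*σ₀^2) * sin (w*T) = -(w * σ₀^2 * cos (w*T)) ↔
      klFreqFun (σ^2 - θ*σ₀^2) (σ₀^2 / T) (w*T) = 0 := fun w => by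
    rw [klFreqFun.div_apply_mul hT.ne', eq_neg_iff_add_eq_zero]
  have hunique : ∀ n : ℕ, 1 ≤ n → ∃! w : ℝ,
      w ∈ Ioo ((n*π)/T - π/(2*T)) ((n*π)/T) ∧
      (σ^2 - θ*σ₀^2) * sin (w*T) = -(w * σ₀^2 * cos (w*T)) := fun n hn => by
    simp only [hE, mem_Ioo_div_iff_mul_mem_Ioo hT]
    exact (Equiv.mulRight₀ T hT.ne').existsUnique_congr_right.2
      (klFreqFun.existsUnique_eq_zero_mem_Ioo ha hb hn)
  have hcover : ∀ w : ℝ, 0 < w → (σ^2 - θ*σ₀^2) * sin (w*T) = -(w * σ₀^2 * cos (w*T)) →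
      ∃ n : ℕ, 1 ≤ n ∧ w ∈ Ioo ((n*π)/T - π/(2*T)) ((n*π)/T) := fun w hw h => by
    have hx := mul_pos hw hT
    simp only [mem_Ioo_div_iff_mul_mem_Ioo hT]
    exact exists_nat_mem_Ioo_of_sin_mul_cos_neg hx
      (klFreqFun.sin_mul_cos_neg ha hb hx ((hE w).1 h))
  refine ⟨hunique, hcover,
    exists_seq_of_existsUnique_mem (fun n m _ hnm x hx y hy => ?_) hunique hcover⟩
  rw [mem_Ioo_div_iff_mul_mem_Ioo hT] at hx hy
  have : (n : ℝ) + 1 ≤ m := by exact_mod_cast hnm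
  have : x * T < y * T := by nlinarith [pi_pos, hx.2, hy.1]
  exact lt_of_mul_lt_mul_right this hT.le

/-- in the case θσ₀² < σ² (with σ₀ > 0), each interval
(nπ/T − π/(2T), nπ/T), n ≥ 1, contains exactly one solution of the
transcendental equation, every positive solution lies in such an interval, and
consequently the positive solutions form a strictly increasing sequence
(w_n)_{n≥1} with w_n ∈ (nπ/T − π/(2T), nπ/T). -/
theorem ou_bridge_KL_frequencies_case_b
    (T σ σ₀ θ : ℝ) (hT : 0 < T) (hσ : 0 < σ) (hσ₀ : 0 < σ₀)
    (hcase : θ*σ₀^2 < σ^2) :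
    (∀ n : ℕ, 1 ≤ n → ∃! w : ℝ,
        w ∈ Ioo ((n*Real.pi)/T - Real.pi/(2*T)) ((n*Real.pi)/T) ∧
        (σ^2 - θ*σ₀^2) * Real.sin (w*T) = -(w * σ₀^2 * Real.cos (w*T))) ∧
    (∀ w : ℝ, 0 < w →
      (σ^2 - θ*σ₀^2) * Real.sin (w*T) = -(w * σ₀^2 * Real.cos (w*T)) →
      ∃ n : ℕ, 1 ≤ n ∧ w ∈ Ioo ((n*Real.pi)/T - Real.pi/(2*T)) ((n*Real.pi)/T)) ∧
    (∃ wseq : ℕ → ℝ,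
      (∀ n m : ℕ, 1 ≤ n → n < m → wseq n < wseq m) ∧
      (∀ n : ℕ, 1 ≤ n →
        wseq n ∈ Ioo ((n*Real.pi)/T - Real.pi/(2*T)) ((n*Real.pi)/T) ∧
        (σ^2 - θ*σ₀^2) * Real.sin (wseq n * T) = -(wseq n * σ₀^2 * Real.cos (wseq n * T))) ∧
      (∀ w : ℝ, 0 < w →
        (σ^2 - θ*σ₀^2) * Real.sin (w*T) = -(w * σ₀^2 * Real.cos (w*T)) →
        ∃ n : ℕ, 1 ≤ n ∧ w = wseq n)) :=
  ou_bridge_KL_frequencies_case_b_general T σ σ₀ θ hT hσ₀ hcase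
end

section
/- Fix T > 0, σ > 0, σ₀ > 0 and θ ∈ ℝ with θσ₀² > σ². Consider the equation (σ² − θσ₀²) sin(wT) = −w σ₀² cos(wT), equivalently (θσ₀² − σ²) tan(wT) = σ₀² w. Then: (i) for every integer k ≥ 1 there is exactly one solution in the open interval (kπ/T, kπ/T + π/(2T)); (ii) there is no solution in [kπ/T + π/(2T), (k+1)π/T] for any k ≥ 1 (other than possible points where cos(wT)=0, which are never solutions here); (iii) there exists a solution in the interval (0, π/(2T)) if and only if T(θσ₀² − σ²) < σ₀², and in that case it is unique. -/
open Real Set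

/-!
With `x = w T` the equation reads `c sin x = x cos x`, where `c = T (θσ₀² - σ²) / σ₀² > 0`, and
the condition of (iii) is `c < 1`. Writing `x = y + kπ` with `y ∈ (0, π)` it becomes
`c sin y = (y + kπ) cos y`. For `d ≥ 0` the map `y ↦ (y + d) cot y` is strictly decreasing on
`(0, π)` (its derivative is `(sin y cos y - y - d) / sin² y`), which gives uniqueness. Existence in
`(0, π/2)` is the intermediate value theorem: `c sin y - (y + d) cos y` equals `c > 0` at `π/2`,
and is negative at `0` when `d = kπ > 0`, or at `arccos c / 2` when `d = 0` and `c < 1`.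
On `[π/2, π]` the two sides have opposite signs, and for `d = 0` a solution in `(0, π/2)` forces
`c < 1` because `x cos x < sin x` there.
-/

section

variable {c d : ℝ}

theorem hasDerivAt_add_mul_cos_div_sin {y : ℝ} (hy : sin y ≠ 0) :
    HasDerivAt (fun y => (y + d) * cos y / sin y)
      ((sin y * cos y - (y + d)) / sin y ^ 2) y := by
  refine ((((hasDerivAt_id' y).add_const d).mul (hasDerivAt_cos y)).div (hasDerivAt_sin y)
    hy).congr_deriv ?_
  congr 1
  simp only [Pi.mul_apply]
  linear_combination -(y + d) * sin_sq_add_cos_sq y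

theorem strictAntiOn_add_mul_cos_div_sin (hd : 0 ≤ d) :
    StrictAntiOn (fun y => (y + d) * cos y / sin y) (Ioo 0 π) := by
  have hsin : ∀ y ∈ Ioo 0 π, 0 < sin y := fun y hy => sin_pos_of_pos_of_lt_pi hy.1 hy.2
  have hderiv : ∀ y ∈ Ioo 0 π, HasDerivAt (fun y => (y + d) * cos y / sin y)
      ((sin y * cos y - (y + d)) / sin y ^ 2) y :=
    fun y hy => hasDerivAt_add_mul_cos_div_sin (hsin y hy).ne'
  refine strictAntiOn_of_hasDerivWithinAt_neg (convex_Ioo 0 π)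
    (fun y hy => (hderiv y hy).continuousAt.continuousWithinAt)
    (fun y hy => (hderiv y (by simpa using hy)).hasDerivWithinAt) fun y hy => ?_
  rw [interior_Ioo] at hy
  have h2y : sin (2 * y) < 2 * y := sin_lt (by linarith [hy.1])
  rw [sin_two_mul] at h2y
  exact div_neg_of_neg_of_pos (by linarith) (pow_pos (hsin y hy) 2)

theorem subsingleton_sin_eq_add_mul_cos (c : ℝ) (hd : 0 ≤ d) :
    {y ∈ Ioo 0 π | c * sin y = (y + d) * cos y}.Subsingleton := by
  have hcot : ∀ y ∈ Ioo 0 π, c * sin y = (y + d) * cos y → (y + d) * cos y / sin y = c :=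
    fun y hy he => by rw [← he, mul_div_cancel_right₀ _ (sin_pos_of_pos_of_lt_pi hy.1 hy.2).ne']
  rintro y ⟨hy, hey⟩ z ⟨hz, hez⟩
  exact (strictAntiOn_add_mul_cos_div_sin hd).injOn hy hz (by rw [hcot y hy hey, hcot z hz hez])

theorem exists_sin_eq_add_mul_cos_mem_Ioo (hc : 0 < c) {a : ℝ} (ha : a ≤ π / 2)
    (hlt : c * sin a < (a + d) * cos a) :
    ∃ y ∈ Ioo a (π / 2), c * sin y = (y + d) * cos y := by
  have hcont : ContinuousOn (fun y => c * sin y - (y + d) * cos y) (Icc a (π / 2)) := by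
    fun_prop
  obtain ⟨y, hy, hzero⟩ := intermediate_value_Ioo ha hcont
    (show (0 : ℝ) ∈ Ioo _ _ from ⟨by linarith, by simpa using hc⟩)
  exact ⟨y, hy, sub_eq_zero.mp hzero⟩

theorem sin_ne_add_mul_cos_of_mem_Icc (hc : 0 < c) (hd : 0 ≤ d) {y : ℝ}
    (hy : y ∈ Icc (π / 2) π) : c * sin y ≠ (y + d) * cos y := by
  have hcos : cos y ≤ 0 := cos_nonpos_of_pi_div_two_le_of_le hy.1 (by linarith [hy.2, pi_pos])
  rcases hy.2.lt_or_eq with hlt | rfl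
  · have hsin : 0 < sin y := sin_pos_of_pos_of_lt_pi (by linarith [hy.1, pi_pos]) hlt
    nlinarith [mul_nonpos_of_nonneg_of_nonpos (by linarith [hy.1, pi_pos] : 0 ≤ y + d) hcos]
  · simp only [sin_pi, cos_pi]
    linarith [pi_pos]

theorem lt_one_of_sin_eq_mul_cos {y : ℝ} (hy : y ∈ Ioo 0 (π / 2))
    (he : c * sin y = y * cos y) : c < 1 := by
  have hcos : 0 < cos y := cos_pos_of_mem_Ioo ⟨by linarith [hy.1, pi_pos], hy.2⟩
  have hsin : 0 < sin y := sin_pos_of_pos_of_lt_pi hy.1 (by linarith [hy.2, pi_pos])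
  have htan : y * cos y < sin y := by
    have := lt_tan hy.1 hy.2
    rwa [tan_eq_sin_div_cos, lt_div_iff₀ hcos] at this
  nlinarith

theorem sin_lt_mul_cos_half_arccos (hc : 0 < c) (hc1 : c < 1) :
    c * sin (arccos c / 2) < arccos c / 2 * cos (arccos c / 2) := by
  have hr : 0 < arccos c := arccos_pos.mpr hc1
  have hsin : sin (arccos c / 2) < arccos c / 2 := sin_lt (by linarith)
  have hcos : c < cos (arccos c / 2) := by
    calc c = cos (arccos c) := (cos_arccos (by linarith) hc1.le).symm
      _ < cos (arccos c / 2) :=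
        cos_lt_cos_of_nonneg_of_le_pi (by linarith) (arccos_le_pi c) (by linarith)
  calc c * sin (arccos c / 2) < c * (arccos c / 2) := mul_lt_mul_of_pos_left hsin hc
    _ < arccos c / 2 * cos (arccos c / 2) := by nlinarith

theorem existsUnique_sin_eq_add_mul_cos_of_exists (hd : 0 ≤ d)
    (h : ∃ y ∈ Ioo 0 (π / 2), c * sin y = (y + d) * cos y) :
    ∃! y, y ∈ Ioo 0 (π / 2) ∧ c * sin y = (y + d) * cos y := by
  obtain ⟨y, hy, he⟩ := h
  have hsub : Ioo 0 (π / 2) ⊆ Ioo 0 π := Ioo_subset_Ioo_right (by linarith [pi_pos])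
  exact ⟨y, ⟨hy, he⟩, fun z hz =>
    subsingleton_sin_eq_add_mul_cos c hd ⟨hsub hz.1, hz.2⟩ ⟨hsub hy, he⟩⟩

theorem sin_eq_mul_cos_add_nat_mul_pi_iff (c y : ℝ) (k : ℕ) :
    c * sin (y + k * π) = (y + k * π) * cos (y + k * π) ↔
      c * sin y = (y + k * π) * cos y := by
  rw [sin_add_nat_mul_pi, cos_add_nat_mul_pi, mul_left_comm c, mul_left_comm (y + k * π),
    mul_right_inj' (pow_ne_zero k (by norm_num))]

theorem existsUnique_sin_eq_mul_cos_of_one_le (hc : 0 < c) {k : ℕ} (hk : 1 ≤ k) :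
    ∃! x, x ∈ Ioo (k * π) (k * π + π / 2) ∧ c * sin x = x * cos x := by
  rw [← (Equiv.addRight (k * π : ℝ)).existsUnique_congr_right]
  simp only [Equiv.coe_addRight, add_mem_Ioo_iff_left, sub_self, add_sub_cancel_left,
    sin_eq_mul_cos_add_nat_mul_pi_iff]
  have hkπ : 0 < (k : ℝ) * π := mul_pos (by exact_mod_cast hk) pi_pos
  exact existsUnique_sin_eq_add_mul_cos_of_exists hkπ.le <|
    exists_sin_eq_add_mul_cos_mem_Ioo (a := 0) hc (by positivity) (by simpa using hkπ)

theorem sin_ne_mul_cos_of_mem_Icc (hc : 0 < c) (k : ℕ) {x : ℝ}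
    (hx : x ∈ Icc (k * π + π / 2) (k * π + π)) : c * sin x ≠ x * cos x := by
  obtain ⟨y, rfl⟩ : ∃ y, x = y + k * π := ⟨x - k * π, by ring⟩
  rw [Ne, sin_eq_mul_cos_add_nat_mul_pi_iff]
  exact sin_ne_add_mul_cos_of_mem_Icc hc (by positivity)
    ⟨by linarith [hx.1], by linarith [hx.2]⟩

theorem exists_sin_eq_mul_cos_iff (hc : 0 < c) :
    (∃ x ∈ Ioo 0 (π / 2), c * sin x = x * cos x) ↔ c < 1 := by
  refine ⟨fun ⟨x, hx, he⟩ => lt_one_of_sin_eq_mul_cos hx he, fun hc1 => ?_⟩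
  have ha : 0 < arccos c / 2 := by linarith [arccos_pos.mpr hc1]
  obtain ⟨x, hx, he⟩ := exists_sin_eq_add_mul_cos_mem_Ioo (a := arccos c / 2) (d := 0) hc
    (by linarith [arccos_lt_pi_div_two.mpr hc]) (by simpa using sin_lt_mul_cos_half_arccos hc hc1)
  exact ⟨x, ⟨ha.trans hx.1, hx.2⟩, by simpa using he⟩

theorem existsUnique_sin_eq_mul_cos_of_lt_one (hc : 0 < c) (hc1 : c < 1) :
    ∃! x, x ∈ Ioo 0 (π / 2) ∧ c * sin x = x * cos x := by
  simpa using existsUnique_sin_eq_add_mul_cos_of_exists (d := 0) le_rfl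
    (by simpa using (exists_sin_eq_mul_cos_iff hc).mpr hc1)

end

theorem ou_bridge_equation_iff {T σ σ₀ θ : ℝ} (hT : T ≠ 0) (hσ₀ : σ₀ ≠ 0) (w : ℝ) :
    (σ^2 - θ*σ₀^2) * sin (w*T) = -(w * σ₀^2 * cos (w*T)) ↔
      T * (θ*σ₀^2 - σ^2) / σ₀^2 * sin (w*T) = w*T * cos (w*T) := by
  rw [div_mul_eq_mul_div, div_eq_iff (pow_ne_zero 2 hσ₀)]
  refine ⟨fun h => by linear_combination (-T) * h, fun h => mul_left_cancel₀ hT ?_⟩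
  linear_combination -h

theorem ou_bridge_KL_frequencies_case_c_general
    (T σ σ₀ θ : ℝ) (hT : 0 < T) (hσ₀ : 0 < σ₀)
    (hcase : σ^2 < θ*σ₀^2) :
    (∀ k : ℕ, 1 ≤ k → ∃! w : ℝ,
        w ∈ Ioo ((k*Real.pi)/T) ((k*Real.pi)/T + Real.pi/(2*T)) ∧
        (σ^2 - θ*σ₀^2) * Real.sin (w*T) = -(w * σ₀^2 * Real.cos (w*T))) ∧
    (∀ k : ℕ, 1 ≤ k → ∀ w ∈ Icc ((k*Real.pi)/T + Real.pi/(2*T)) (((k+1)*Real.pi)/T),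
        ¬ ((σ^2 - θ*σ₀^2) * Real.sin (w*T) = -(w * σ₀^2 * Real.cos (w*T)))) ∧
    ((∃ w ∈ Ioo (0:ℝ) (Real.pi/(2*T)),
        (σ^2 - θ*σ₀^2) * Real.sin (w*T) = -(w * σ₀^2 * Real.cos (w*T)))
      ↔ T*(θ*σ₀^2 - σ^2) < σ₀^2) ∧
    (T*(θ*σ₀^2 - σ^2) < σ₀^2 → ∃! w : ℝ,
        w ∈ Ioo (0:ℝ) (Real.pi/(2*T)) ∧
        (σ^2 - θ*σ₀^2) * Real.sin (w*T) = -(w * σ₀^2 * Real.cos (w*T))) := by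
  set c := T * (θ*σ₀^2 - σ^2) / σ₀^2
  have hc : 0 < c := div_pos (mul_pos hT (sub_pos.mpr hcase)) (by positivity)
  have hc1 : T*(θ*σ₀^2 - σ^2) < σ₀^2 ↔ c < 1 := (div_lt_one (by positivity)).symm
  have hE := ou_bridge_equation_iff (σ := σ) (θ := θ) hT.ne' hσ₀.ne'
  have hmem (a b w : ℝ) : w ∈ Ioo (a / T) (b / T) ↔ w * T ∈ Ioo a b := by
    rw [← preimage_mul_const_Ioo₀ a b hT]; rfl
  have hscale (a b : ℝ) : (∃! w, w ∈ Ioo (a / T) (b / T) ∧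
      (σ^2 - θ*σ₀^2) * sin (w*T) = -(w * σ₀^2 * cos (w*T))) ↔
      ∃! x, x ∈ Ioo a b ∧ c * sin x = x * cos x :=
    (Equiv.mulRight₀ T hT.ne').existsUnique_congr fun w => by rw [hmem, hE]; rfl
  have hπ2 : π / (2 * T) = π / 2 / T := by rw [div_div]
  refine ⟨fun k hk => ?_, fun k _ w hw => ?_, ?_, fun h => ?_⟩
  · rw [hπ2, ← add_div, hscale]
    exact existsUnique_sin_eq_mul_cos_of_one_le hc hk
  · rw [hπ2, ← add_div, add_one_mul, ← preimage_mul_const_Icc₀ _ _ hT] at hw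
    rw [hE]
    exact sin_ne_mul_cos_of_mem_Icc hc k hw
  · rw [hπ2, ← zero_div T, hc1, ← exists_sin_eq_mul_cos_iff hc]
    exact (Equiv.mulRight₀ T hT.ne').exists_congr fun w => by rw [hmem, hE]; rfl
  · rw [hπ2, ← zero_div T, hscale]
    exact existsUnique_sin_eq_mul_cos_of_lt_one hc (hc1.mp h)

/-- in the case θσ₀² > σ² (with σ₀ > 0): (i) each interval
(kπ/T, kπ/T + π/(2T)), k ≥ 1, contains exactly one solution of the
transcendental equation; (ii) there is no solution in
[kπ/T + π/(2T), (k+1)π/T] for k ≥ 1; (iii) there is a solution in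
(0, π/(2T)) iff T(θσ₀² − σ²) < σ₀², and then it is unique. -/
theorem ou_bridge_KL_frequencies_case_c
    (T σ σ₀ θ : ℝ) (hT : 0 < T) (hσ : 0 < σ) (hσ₀ : 0 < σ₀)
    (hcase : σ^2 < θ*σ₀^2) :
    (∀ k : ℕ, 1 ≤ k → ∃! w : ℝ,
        w ∈ Ioo ((k*Real.pi)/T) ((k*Real.pi)/T + Real.pi/(2*T)) ∧
        (σ^2 - θ*σ₀^2) * Real.sin (w*T) = -(w * σ₀^2 * Real.cos (w*T))) ∧
    (∀ k : ℕ, 1 ≤ k → ∀ w ∈ Icc ((k*Real.pi)/T + Real.pi/(2*T)) (((k+1)*Real.pi)/T),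
        ¬ ((σ^2 - θ*σ₀^2) * Real.sin (w*T) = -(w * σ₀^2 * Real.cos (w*T)))) ∧
    ((∃ w ∈ Ioo (0:ℝ) (Real.pi/(2*T)),
        (σ^2 - θ*σ₀^2) * Real.sin (w*T) = -(w * σ₀^2 * Real.cos (w*T)))
      ↔ T*(θ*σ₀^2 - σ^2) < σ₀^2) ∧
    (T*(θ*σ₀^2 - σ^2) < σ₀^2 → ∃! w : ℝ,
        w ∈ Ioo (0:ℝ) (Real.pi/(2*T)) ∧
        (σ^2 - θ*σ₀^2) * Real.sin (w*T) = -(w * σ₀^2 * Real.cos (w*T))) :=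
  ou_bridge_KL_frequencies_case_c_general T σ σ₀ θ hT hσ₀ hcase
end
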